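/- Let C ∈ Λ satisfy ⟨C,C⟩ = 4 and ⟨C,K⟩ = −4. Then for every D ∈ Λ the following identity holds in Λ: 6·D + 6·⟨K+C, D⟩·(K+C) + Σ_{E} ⟨D,E⟩·E = Σ_{(F,G)} ⟨D,F⟩·G, where the first sum runs over all line classes E with ⟨C,E⟩ = 1, and the second sum runs over all ordered pairs (F,G) of fiber classes with F + G = C. -/
import Mathlib

set_option maxHeartbeats 4000000

/-- The Picard lattice of the cubic surface: free ℤ-module of rank 7
with basis h, e₁, …, e₆ (coordinates: index 0 ↦ coefficient of h,
index i+1 ↦ coefficient of eᵢ). -/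
abbrev Lam : Type := Fin 7 → ℤ

/-- The intersection form: ⟨h,h⟩ = 1, ⟨eᵢ,eᵢ⟩ = −1, distinct basis vectors orthogonal. -/
def ip (x y : Lam) : ℤ := x 0 * y 0 - ∑ i : Fin 6, x i.succ * y i.succ

/-- The canonical class K = −3h + e₁ + ⋯ + e₆. -/
def Kc : Lam := ![-3, 1, 1, 1, 1, 1, 1]

/-- A line class: x with ⟨x,x⟩ = −1 and ⟨x,K⟩ = −1. -/
def IsLine (x : Lam) : Prop := ip x x = -1 ∧ ip x Kc = -1

/-- A fiber class: x with ⟨x,x⟩ = 0 and ⟨x,K⟩ = −2. -/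
def IsFiber (x : Lam) : Prop := ip x x = 0 ∧ ip x Kc = -2

lemma ip_expand (x y : Lam) : ip x y =
    x 0 * y 0 - (x 1 * y 1 + x 2 * y 2 + x 3 * y 3 + x 4 * y 4 + x 5 * y 5 + x 6 * y 6) := by
  simp only [ip, Fin.sum_univ_six]
  norm_num [show (Fin.succ 0 : Fin 7) = 1 from rfl, show (Fin.succ 1 : Fin 7) = 2 from rfl,
    show (Fin.succ 2 : Fin 7) = 3 from rfl, show (Fin.succ 3 : Fin 7) = 4 from rfl,
    show (Fin.succ 4 : Fin 7) = 5 from rfl, show (Fin.succ 5 : Fin 7) = 6 from rfl]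

@[simp] lemma Kc_0 : Kc 0 = -3 := rfl
@[simp] lemma Kc_1 : Kc 1 = 1 := rfl
@[simp] lemma Kc_2 : Kc 2 = 1 := rfl
@[simp] lemma Kc_3 : Kc 3 = 1 := rfl
@[simp] lemma Kc_4 : Kc 4 = 1 := rfl
@[simp] lemma Kc_5 : Kc 5 = 1 := rfl
@[simp] lemma Kc_6 : Kc 6 = 1 := rfl

def fromTup : ℤ×ℤ×ℤ×ℤ×ℤ×ℤ×ℤ → Lam :=
  fun t => ![t.1, t.2.1, t.2.2.1, t.2.2.2.1, t.2.2.2.2.1, t.2.2.2.2.2.1, t.2.2.2.2.2.2]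

lemma expand_self (x : Lam) : x = fromTup (x 0, x 1, x 2, x 3, x 4, x 5, x 6) := by
  funext i; fin_cases i <;> rfl

-- generic bound helpers
lemma line_bndA {a : ℤ} (h : 0 ≤ 6*(a*a + 1) - (1 - 3*a)^2) : 0 ≤ a ∧ a ≤ 2 :=
  ⟨by nlinarith [h, sq_nonneg (a+1)], by nlinarith [h, sq_nonneg (a-3)]⟩
lemma line_bndB {a b : ℤ} (h : 0 ≤ 5*((a*a + 1) - b*b) - ((1 - 3*a) - b)^2) : -1 ≤ b ∧ b ≤ 1 :=
  ⟨by nlinarith [h, sq_nonneg (4*a+3*b-3), sq_nonneg (b+2)],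
   by nlinarith [h, sq_nonneg (4*a+3*b-3), sq_nonneg (b-2)]⟩
lemma fiber_bndA {a : ℤ} (h : 0 ≤ 6*(a*a) - (2 - 3*a)^2) : 1 ≤ a ∧ a ≤ 3 :=
  ⟨by nlinarith [h, sq_nonneg a], by nlinarith [h, sq_nonneg (a-4)]⟩
lemma fiber_bndB {a b : ℤ} (h : 0 ≤ 5*((a*a) - b*b) - ((2 - 3*a) - b)^2) : -2 ≤ b ∧ b ≤ 0 :=
  ⟨by nlinarith [h, sq_nonneg (4*a+3*b-6), sq_nonneg (b+3)],
   by nlinarith [h, sq_nonneg (4*a+3*b-6), sq_nonneg (b-1)]⟩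
lemma C_bndA {a : ℤ} (h : 0 ≤ 6*(a*a - 4) - (4 - 3*a)^2) : 3 ≤ a ∧ a ≤ 5 :=
  ⟨by nlinarith [h, sq_nonneg (a-2)], by nlinarith [h, sq_nonneg (a-6)]⟩
lemma C_bndB {a b : ℤ} (h : 0 ≤ 5*((a*a - 4) - b*b) - ((4 - 3*a) - b)^2) : -2 ≤ b ∧ b ≤ 0 :=
  ⟨by nlinarith [h, sq_nonneg (4*a+3*b-12), sq_nonneg (b+3)],
   by nlinarith [h, sq_nonneg (4*a+3*b-12), sq_nonneg (b-1)]⟩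
def lineT : ℕ → Lam := fun k =>
  if k = 0 then ![0, 0, 0, 0, 0, 0, 1] else
  if k = 1 then ![0, 0, 0, 0, 0, 1, 0] else
  if k = 2 then ![0, 0, 0, 0, 1, 0, 0] else
  if k = 3 then ![0, 0, 0, 1, 0, 0, 0] else
  if k = 4 then ![0, 0, 1, 0, 0, 0, 0] else
  if k = 5 then ![0, 1, 0, 0, 0, 0, 0] else
  if k = 6 then ![1, -1, -1, 0, 0, 0, 0] else
  if k = 7 then ![1, -1, 0, -1, 0, 0, 0] else
  if k = 8 then ![1, -1, 0, 0, -1, 0, 0] else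
  if k = 9 then ![1, -1, 0, 0, 0, -1, 0] else
  if k = 10 then ![1, -1, 0, 0, 0, 0, -1] else
  if k = 11 then ![1, 0, -1, -1, 0, 0, 0] else
  if k = 12 then ![1, 0, -1, 0, -1, 0, 0] else
  if k = 13 then ![1, 0, -1, 0, 0, -1, 0] else
  if k = 14 then ![1, 0, -1, 0, 0, 0, -1] else
  if k = 15 then ![1, 0, 0, -1, -1, 0, 0] else
  if k = 16 then ![1, 0, 0, -1, 0, -1, 0] else
  if k = 17 then ![1, 0, 0, -1, 0, 0, -1] else
  if k = 18 then ![1, 0, 0, 0, -1, -1, 0] else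
  if k = 19 then ![1, 0, 0, 0, -1, 0, -1] else
  if k = 20 then ![1, 0, 0, 0, 0, -1, -1] else
  if k = 21 then ![2, -1, -1, -1, -1, -1, 0] else
  if k = 22 then ![2, -1, -1, -1, -1, 0, -1] else
  if k = 23 then ![2, -1, -1, -1, 0, -1, -1] else
  if k = 24 then ![2, -1, -1, 0, -1, -1, -1] else
  if k = 25 then ![2, -1, 0, -1, -1, -1, -1] else
  ![2, 0, -1, -1, -1, -1, -1]

def fiberT : ℕ → Lam := fun k =>
  if k = 0 then ![1, -1, 0, 0, 0, 0, 0] else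
  if k = 1 then ![1, 0, -1, 0, 0, 0, 0] else
  if k = 2 then ![1, 0, 0, -1, 0, 0, 0] else
  if k = 3 then ![1, 0, 0, 0, -1, 0, 0] else
  if k = 4 then ![1, 0, 0, 0, 0, -1, 0] else
  if k = 5 then ![1, 0, 0, 0, 0, 0, -1] else
  if k = 6 then ![2, -1, -1, -1, -1, 0, 0] else
  if k = 7 then ![2, -1, -1, -1, 0, -1, 0] else
  if k = 8 then ![2, -1, -1, -1, 0, 0, -1] else
  if k = 9 then ![2, -1, -1, 0, -1, -1, 0] else
  if k = 10 then ![2, -1, -1, 0, -1, 0, -1] else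
  if k = 11 then ![2, -1, -1, 0, 0, -1, -1] else
  if k = 12 then ![2, -1, 0, -1, -1, -1, 0] else
  if k = 13 then ![2, -1, 0, -1, -1, 0, -1] else
  if k = 14 then ![2, -1, 0, -1, 0, -1, -1] else
  if k = 15 then ![2, -1, 0, 0, -1, -1, -1] else
  if k = 16 then ![2, 0, -1, -1, -1, -1, 0] else
  if k = 17 then ![2, 0, -1, -1, -1, 0, -1] else
  if k = 18 then ![2, 0, -1, -1, 0, -1, -1] else
  if k = 19 then ![2, 0, -1, 0, -1, -1, -1] else
  if k = 20 then ![2, 0, 0, -1, -1, -1, -1] else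
  if k = 21 then ![3, -2, -1, -1, -1, -1, -1] else
  if k = 22 then ![3, -1, -2, -1, -1, -1, -1] else
  if k = 23 then ![3, -1, -1, -2, -1, -1, -1] else
  if k = 24 then ![3, -1, -1, -1, -2, -1, -1] else
  if k = 25 then ![3, -1, -1, -1, -1, -2, -1] else
  ![3, -1, -1, -1, -1, -1, -2]

def CT : ℕ → Lam := fun k =>
  if k = 0 then ![3, -1, -1, -1, -1, -1, 0] else
  if k = 1 then ![3, -1, -1, -1, -1, 0, -1] else
  if k = 2 then ![3, -1, -1, -1, 0, -1, -1] else
  if k = 3 then ![3, -1, -1, 0, -1, -1, -1] else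
  if k = 4 then ![3, -1, 0, -1, -1, -1, -1] else
  if k = 5 then ![3, 0, -1, -1, -1, -1, -1] else
  if k = 6 then ![4, -2, -2, -1, -1, -1, -1] else
  if k = 7 then ![4, -2, -1, -2, -1, -1, -1] else
  if k = 8 then ![4, -2, -1, -1, -2, -1, -1] else
  if k = 9 then ![4, -2, -1, -1, -1, -2, -1] else
  if k = 10 then ![4, -2, -1, -1, -1, -1, -2] else
  if k = 11 then ![4, -1, -2, -2, -1, -1, -1] else
  if k = 12 then ![4, -1, -2, -1, -2, -1, -1] else
  if k = 13 then ![4, -1, -2, -1, -1, -2, -1] else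
  if k = 14 then ![4, -1, -2, -1, -1, -1, -2] else
  if k = 15 then ![4, -1, -1, -2, -2, -1, -1] else
  if k = 16 then ![4, -1, -1, -2, -1, -2, -1] else
  if k = 17 then ![4, -1, -1, -2, -1, -1, -2] else
  if k = 18 then ![4, -1, -1, -1, -2, -2, -1] else
  if k = 19 then ![4, -1, -1, -1, -2, -1, -2] else
  if k = 20 then ![4, -1, -1, -1, -1, -2, -2] else
  if k = 21 then ![5, -2, -2, -2, -2, -2, -1] else
  if k = 22 then ![5, -2, -2, -2, -2, -1, -2] else
  if k = 23 then ![5, -2, -2, -2, -1, -2, -2] else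
  if k = 24 then ![5, -2, -2, -1, -2, -2, -2] else
  if k = 25 then ![5, -2, -1, -2, -2, -2, -2] else
  ![5, -1, -2, -2, -2, -2, -2]

@[simp] lemma lineT_0_0 : lineT 0 0 = 0 := rfl
@[simp] lemma lineT_0_1 : lineT 0 1 = 0 := rfl
@[simp] lemma lineT_0_2 : lineT 0 2 = 0 := rfl
@[simp] lemma lineT_0_3 : lineT 0 3 = 0 := rfl
@[simp] lemma lineT_0_4 : lineT 0 4 = 0 := rfl
@[simp] lemma lineT_0_5 : lineT 0 5 = 0 := rfl
@[simp] lemma lineT_0_6 : lineT 0 6 = 1 := rfl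
@[simp] lemma lineT_1_0 : lineT 1 0 = 0 := rfl
@[simp] lemma lineT_1_1 : lineT 1 1 = 0 := rfl
@[simp] lemma lineT_1_2 : lineT 1 2 = 0 := rfl
@[simp] lemma lineT_1_3 : lineT 1 3 = 0 := rfl
@[simp] lemma lineT_1_4 : lineT 1 4 = 0 := rfl
@[simp] lemma lineT_1_5 : lineT 1 5 = 1 := rfl
@[simp] lemma lineT_1_6 : lineT 1 6 = 0 := rfl
@[simp] lemma lineT_2_0 : lineT 2 0 = 0 := rfl
@[simp] lemma lineT_2_1 : lineT 2 1 = 0 := rfl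
@[simp] lemma lineT_2_2 : lineT 2 2 = 0 := rfl
@[simp] lemma lineT_2_3 : lineT 2 3 = 0 := rfl
@[simp] lemma lineT_2_4 : lineT 2 4 = 1 := rfl
@[simp] lemma lineT_2_5 : lineT 2 5 = 0 := rfl
@[simp] lemma lineT_2_6 : lineT 2 6 = 0 := rfl
@[simp] lemma lineT_3_0 : lineT 3 0 = 0 := rfl
@[simp] lemma lineT_3_1 : lineT 3 1 = 0 := rfl
@[simp] lemma lineT_3_2 : lineT 3 2 = 0 := rfl
@[simp] lemma lineT_3_3 : lineT 3 3 = 1 := rfl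
@[simp] lemma lineT_3_4 : lineT 3 4 = 0 := rfl
@[simp] lemma lineT_3_5 : lineT 3 5 = 0 := rfl
@[simp] lemma lineT_3_6 : lineT 3 6 = 0 := rfl
@[simp] lemma lineT_4_0 : lineT 4 0 = 0 := rfl
@[simp] lemma lineT_4_1 : lineT 4 1 = 0 := rfl
@[simp] lemma lineT_4_2 : lineT 4 2 = 1 := rfl
@[simp] lemma lineT_4_3 : lineT 4 3 = 0 := rfl
@[simp] lemma lineT_4_4 : lineT 4 4 = 0 := rfl
@[simp] lemma lineT_4_5 : lineT 4 5 = 0 := rfl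
@[simp] lemma lineT_4_6 : lineT 4 6 = 0 := rfl
@[simp] lemma lineT_5_0 : lineT 5 0 = 0 := rfl
@[simp] lemma lineT_5_1 : lineT 5 1 = 1 := rfl
@[simp] lemma lineT_5_2 : lineT 5 2 = 0 := rfl
@[simp] lemma lineT_5_3 : lineT 5 3 = 0 := rfl
@[simp] lemma lineT_5_4 : lineT 5 4 = 0 := rfl
@[simp] lemma lineT_5_5 : lineT 5 5 = 0 := rfl
@[simp] lemma lineT_5_6 : lineT 5 6 = 0 := rfl
@[simp] lemma lineT_6_0 : lineT 6 0 = 1 := rfl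
@[simp] lemma lineT_6_1 : lineT 6 1 = -1 := rfl
@[simp] lemma lineT_6_2 : lineT 6 2 = -1 := rfl
@[simp] lemma lineT_6_3 : lineT 6 3 = 0 := rfl
@[simp] lemma lineT_6_4 : lineT 6 4 = 0 := rfl
@[simp] lemma lineT_6_5 : lineT 6 5 = 0 := rfl
@[simp] lemma lineT_6_6 : lineT 6 6 = 0 := rfl
@[simp] lemma lineT_7_0 : lineT 7 0 = 1 := rfl
@[simp] lemma lineT_7_1 : lineT 7 1 = -1 := rfl
@[simp] lemma lineT_7_2 : lineT 7 2 = 0 := rfl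
@[simp] lemma lineT_7_3 : lineT 7 3 = -1 := rfl
@[simp] lemma lineT_7_4 : lineT 7 4 = 0 := rfl
@[simp] lemma lineT_7_5 : lineT 7 5 = 0 := rfl
@[simp] lemma lineT_7_6 : lineT 7 6 = 0 := rfl
@[simp] lemma lineT_8_0 : lineT 8 0 = 1 := rfl
@[simp] lemma lineT_8_1 : lineT 8 1 = -1 := rfl
@[simp] lemma lineT_8_2 : lineT 8 2 = 0 := rfl
@[simp] lemma lineT_8_3 : lineT 8 3 = 0 := rfl
@[simp] lemma lineT_8_4 : lineT 8 4 = -1 := rfl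
@[simp] lemma lineT_8_5 : lineT 8 5 = 0 := rfl
@[simp] lemma lineT_8_6 : lineT 8 6 = 0 := rfl
@[simp] lemma lineT_9_0 : lineT 9 0 = 1 := rfl
@[simp] lemma lineT_9_1 : lineT 9 1 = -1 := rfl
@[simp] lemma lineT_9_2 : lineT 9 2 = 0 := rfl
@[simp] lemma lineT_9_3 : lineT 9 3 = 0 := rfl
@[simp] lemma lineT_9_4 : lineT 9 4 = 0 := rfl
@[simp] lemma lineT_9_5 : lineT 9 5 = -1 := rfl
@[simp] lemma lineT_9_6 : lineT 9 6 = 0 := rfl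
@[simp] lemma lineT_10_0 : lineT 10 0 = 1 := rfl
@[simp] lemma lineT_10_1 : lineT 10 1 = -1 := rfl
@[simp] lemma lineT_10_2 : lineT 10 2 = 0 := rfl
@[simp] lemma lineT_10_3 : lineT 10 3 = 0 := rfl
@[simp] lemma lineT_10_4 : lineT 10 4 = 0 := rfl
@[simp] lemma lineT_10_5 : lineT 10 5 = 0 := rfl
@[simp] lemma lineT_10_6 : lineT 10 6 = -1 := rfl
@[simp] lemma lineT_11_0 : lineT 11 0 = 1 := rfl
@[simp] lemma lineT_11_1 : lineT 11 1 = 0 := rfl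
@[simp] lemma lineT_11_2 : lineT 11 2 = -1 := rfl
@[simp] lemma lineT_11_3 : lineT 11 3 = -1 := rfl
@[simp] lemma lineT_11_4 : lineT 11 4 = 0 := rfl
@[simp] lemma lineT_11_5 : lineT 11 5 = 0 := rfl
@[simp] lemma lineT_11_6 : lineT 11 6 = 0 := rfl
@[simp] lemma lineT_12_0 : lineT 12 0 = 1 := rfl
@[simp] lemma lineT_12_1 : lineT 12 1 = 0 := rfl
@[simp] lemma lineT_12_2 : lineT 12 2 = -1 := rfl
@[simp] lemma lineT_12_3 : lineT 12 3 = 0 := rfl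
@[simp] lemma lineT_12_4 : lineT 12 4 = -1 := rfl
@[simp] lemma lineT_12_5 : lineT 12 5 = 0 := rfl
@[simp] lemma lineT_12_6 : lineT 12 6 = 0 := rfl
@[simp] lemma lineT_13_0 : lineT 13 0 = 1 := rfl
@[simp] lemma lineT_13_1 : lineT 13 1 = 0 := rfl
@[simp] lemma lineT_13_2 : lineT 13 2 = -1 := rfl
@[simp] lemma lineT_13_3 : lineT 13 3 = 0 := rfl
@[simp] lemma lineT_13_4 : lineT 13 4 = 0 := rfl
@[simp] lemma lineT_13_5 : lineT 13 5 = -1 := rfl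
@[simp] lemma lineT_13_6 : lineT 13 6 = 0 := rfl
@[simp] lemma lineT_14_0 : lineT 14 0 = 1 := rfl
@[simp] lemma lineT_14_1 : lineT 14 1 = 0 := rfl
@[simp] lemma lineT_14_2 : lineT 14 2 = -1 := rfl
@[simp] lemma lineT_14_3 : lineT 14 3 = 0 := rfl
@[simp] lemma lineT_14_4 : lineT 14 4 = 0 := rfl
@[simp] lemma lineT_14_5 : lineT 14 5 = 0 := rfl
@[simp] lemma lineT_14_6 : lineT 14 6 = -1 := rfl
@[simp] lemma lineT_15_0 : lineT 15 0 = 1 := rfl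
@[simp] lemma lineT_15_1 : lineT 15 1 = 0 := rfl
@[simp] lemma lineT_15_2 : lineT 15 2 = 0 := rfl
@[simp] lemma lineT_15_3 : lineT 15 3 = -1 := rfl
@[simp] lemma lineT_15_4 : lineT 15 4 = -1 := rfl
@[simp] lemma lineT_15_5 : lineT 15 5 = 0 := rfl
@[simp] lemma lineT_15_6 : lineT 15 6 = 0 := rfl
@[simp] lemma lineT_16_0 : lineT 16 0 = 1 := rfl
@[simp] lemma lineT_16_1 : lineT 16 1 = 0 := rfl
@[simp] lemma lineT_16_2 : lineT 16 2 = 0 := rfl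
@[simp] lemma lineT_16_3 : lineT 16 3 = -1 := rfl
@[simp] lemma lineT_16_4 : lineT 16 4 = 0 := rfl
@[simp] lemma lineT_16_5 : lineT 16 5 = -1 := rfl
@[simp] lemma lineT_16_6 : lineT 16 6 = 0 := rfl
@[simp] lemma lineT_17_0 : lineT 17 0 = 1 := rfl
@[simp] lemma lineT_17_1 : lineT 17 1 = 0 := rfl
@[simp] lemma lineT_17_2 : lineT 17 2 = 0 := rfl
@[simp] lemma lineT_17_3 : lineT 17 3 = -1 := rfl
@[simp] lemma lineT_17_4 : lineT 17 4 = 0 := rfl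
@[simp] lemma lineT_17_5 : lineT 17 5 = 0 := rfl
@[simp] lemma lineT_17_6 : lineT 17 6 = -1 := rfl
@[simp] lemma lineT_18_0 : lineT 18 0 = 1 := rfl
@[simp] lemma lineT_18_1 : lineT 18 1 = 0 := rfl
@[simp] lemma lineT_18_2 : lineT 18 2 = 0 := rfl
@[simp] lemma lineT_18_3 : lineT 18 3 = 0 := rfl
@[simp] lemma lineT_18_4 : lineT 18 4 = -1 := rfl
@[simp] lemma lineT_18_5 : lineT 18 5 = -1 := rfl
@[simp] lemma lineT_18_6 : lineT 18 6 = 0 := rfl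
@[simp] lemma lineT_19_0 : lineT 19 0 = 1 := rfl
@[simp] lemma lineT_19_1 : lineT 19 1 = 0 := rfl
@[simp] lemma lineT_19_2 : lineT 19 2 = 0 := rfl
@[simp] lemma lineT_19_3 : lineT 19 3 = 0 := rfl
@[simp] lemma lineT_19_4 : lineT 19 4 = -1 := rfl
@[simp] lemma lineT_19_5 : lineT 19 5 = 0 := rfl
@[simp] lemma lineT_19_6 : lineT 19 6 = -1 := rfl
@[simp] lemma lineT_20_0 : lineT 20 0 = 1 := rfl
@[simp] lemma lineT_20_1 : lineT 20 1 = 0 := rfl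
@[simp] lemma lineT_20_2 : lineT 20 2 = 0 := rfl
@[simp] lemma lineT_20_3 : lineT 20 3 = 0 := rfl
@[simp] lemma lineT_20_4 : lineT 20 4 = 0 := rfl
@[simp] lemma lineT_20_5 : lineT 20 5 = -1 := rfl
@[simp] lemma lineT_20_6 : lineT 20 6 = -1 := rfl
@[simp] lemma lineT_21_0 : lineT 21 0 = 2 := rfl
@[simp] lemma lineT_21_1 : lineT 21 1 = -1 := rfl
@[simp] lemma lineT_21_2 : lineT 21 2 = -1 := rfl
@[simp] lemma lineT_21_3 : lineT 21 3 = -1 := rfl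
@[simp] lemma lineT_21_4 : lineT 21 4 = -1 := rfl
@[simp] lemma lineT_21_5 : lineT 21 5 = -1 := rfl
@[simp] lemma lineT_21_6 : lineT 21 6 = 0 := rfl
@[simp] lemma lineT_22_0 : lineT 22 0 = 2 := rfl
@[simp] lemma lineT_22_1 : lineT 22 1 = -1 := rfl
@[simp] lemma lineT_22_2 : lineT 22 2 = -1 := rfl
@[simp] lemma lineT_22_3 : lineT 22 3 = -1 := rfl
@[simp] lemma lineT_22_4 : lineT 22 4 = -1 := rfl
@[simp] lemma lineT_22_5 : lineT 22 5 = 0 := rfl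
@[simp] lemma lineT_22_6 : lineT 22 6 = -1 := rfl
@[simp] lemma lineT_23_0 : lineT 23 0 = 2 := rfl
@[simp] lemma lineT_23_1 : lineT 23 1 = -1 := rfl
@[simp] lemma lineT_23_2 : lineT 23 2 = -1 := rfl
@[simp] lemma lineT_23_3 : lineT 23 3 = -1 := rfl
@[simp] lemma lineT_23_4 : lineT 23 4 = 0 := rfl
@[simp] lemma lineT_23_5 : lineT 23 5 = -1 := rfl
@[simp] lemma lineT_23_6 : lineT 23 6 = -1 := rfl
@[simp] lemma lineT_24_0 : lineT 24 0 = 2 := rfl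
@[simp] lemma lineT_24_1 : lineT 24 1 = -1 := rfl
@[simp] lemma lineT_24_2 : lineT 24 2 = -1 := rfl
@[simp] lemma lineT_24_3 : lineT 24 3 = 0 := rfl
@[simp] lemma lineT_24_4 : lineT 24 4 = -1 := rfl
@[simp] lemma lineT_24_5 : lineT 24 5 = -1 := rfl
@[simp] lemma lineT_24_6 : lineT 24 6 = -1 := rfl
@[simp] lemma lineT_25_0 : lineT 25 0 = 2 := rfl
@[simp] lemma lineT_25_1 : lineT 25 1 = -1 := rfl
@[simp] lemma lineT_25_2 : lineT 25 2 = 0 := rfl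
@[simp] lemma lineT_25_3 : lineT 25 3 = -1 := rfl
@[simp] lemma lineT_25_4 : lineT 25 4 = -1 := rfl
@[simp] lemma lineT_25_5 : lineT 25 5 = -1 := rfl
@[simp] lemma lineT_25_6 : lineT 25 6 = -1 := rfl
@[simp] lemma lineT_26_0 : lineT 26 0 = 2 := rfl
@[simp] lemma lineT_26_1 : lineT 26 1 = 0 := rfl
@[simp] lemma lineT_26_2 : lineT 26 2 = -1 := rfl
@[simp] lemma lineT_26_3 : lineT 26 3 = -1 := rfl
@[simp] lemma lineT_26_4 : lineT 26 4 = -1 := rfl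
@[simp] lemma lineT_26_5 : lineT 26 5 = -1 := rfl
@[simp] lemma lineT_26_6 : lineT 26 6 = -1 := rfl

@[simp] lemma fiberT_0_0 : fiberT 0 0 = 1 := rfl
@[simp] lemma fiberT_0_1 : fiberT 0 1 = -1 := rfl
@[simp] lemma fiberT_0_2 : fiberT 0 2 = 0 := rfl
@[simp] lemma fiberT_0_3 : fiberT 0 3 = 0 := rfl
@[simp] lemma fiberT_0_4 : fiberT 0 4 = 0 := rfl
@[simp] lemma fiberT_0_5 : fiberT 0 5 = 0 := rfl
@[simp] lemma fiberT_0_6 : fiberT 0 6 = 0 := rfl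
@[simp] lemma fiberT_1_0 : fiberT 1 0 = 1 := rfl
@[simp] lemma fiberT_1_1 : fiberT 1 1 = 0 := rfl
@[simp] lemma fiberT_1_2 : fiberT 1 2 = -1 := rfl
@[simp] lemma fiberT_1_3 : fiberT 1 3 = 0 := rfl
@[simp] lemma fiberT_1_4 : fiberT 1 4 = 0 := rfl
@[simp] lemma fiberT_1_5 : fiberT 1 5 = 0 := rfl
@[simp] lemma fiberT_1_6 : fiberT 1 6 = 0 := rfl
@[simp] lemma fiberT_2_0 : fiberT 2 0 = 1 := rfl
@[simp] lemma fiberT_2_1 : fiberT 2 1 = 0 := rfl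
@[simp] lemma fiberT_2_2 : fiberT 2 2 = 0 := rfl
@[simp] lemma fiberT_2_3 : fiberT 2 3 = -1 := rfl
@[simp] lemma fiberT_2_4 : fiberT 2 4 = 0 := rfl
@[simp] lemma fiberT_2_5 : fiberT 2 5 = 0 := rfl
@[simp] lemma fiberT_2_6 : fiberT 2 6 = 0 := rfl
@[simp] lemma fiberT_3_0 : fiberT 3 0 = 1 := rfl
@[simp] lemma fiberT_3_1 : fiberT 3 1 = 0 := rfl
@[simp] lemma fiberT_3_2 : fiberT 3 2 = 0 := rfl
@[simp] lemma fiberT_3_3 : fiberT 3 3 = 0 := rfl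
@[simp] lemma fiberT_3_4 : fiberT 3 4 = -1 := rfl
@[simp] lemma fiberT_3_5 : fiberT 3 5 = 0 := rfl
@[simp] lemma fiberT_3_6 : fiberT 3 6 = 0 := rfl
@[simp] lemma fiberT_4_0 : fiberT 4 0 = 1 := rfl
@[simp] lemma fiberT_4_1 : fiberT 4 1 = 0 := rfl
@[simp] lemma fiberT_4_2 : fiberT 4 2 = 0 := rfl
@[simp] lemma fiberT_4_3 : fiberT 4 3 = 0 := rfl
@[simp] lemma fiberT_4_4 : fiberT 4 4 = 0 := rfl
@[simp] lemma fiberT_4_5 : fiberT 4 5 = -1 := rfl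
@[simp] lemma fiberT_4_6 : fiberT 4 6 = 0 := rfl
@[simp] lemma fiberT_5_0 : fiberT 5 0 = 1 := rfl
@[simp] lemma fiberT_5_1 : fiberT 5 1 = 0 := rfl
@[simp] lemma fiberT_5_2 : fiberT 5 2 = 0 := rfl
@[simp] lemma fiberT_5_3 : fiberT 5 3 = 0 := rfl
@[simp] lemma fiberT_5_4 : fiberT 5 4 = 0 := rfl
@[simp] lemma fiberT_5_5 : fiberT 5 5 = 0 := rfl
@[simp] lemma fiberT_5_6 : fiberT 5 6 = -1 := rfl
@[simp] lemma fiberT_6_0 : fiberT 6 0 = 2 := rfl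
@[simp] lemma fiberT_6_1 : fiberT 6 1 = -1 := rfl
@[simp] lemma fiberT_6_2 : fiberT 6 2 = -1 := rfl
@[simp] lemma fiberT_6_3 : fiberT 6 3 = -1 := rfl
@[simp] lemma fiberT_6_4 : fiberT 6 4 = -1 := rfl
@[simp] lemma fiberT_6_5 : fiberT 6 5 = 0 := rfl
@[simp] lemma fiberT_6_6 : fiberT 6 6 = 0 := rfl
@[simp] lemma fiberT_7_0 : fiberT 7 0 = 2 := rfl
@[simp] lemma fiberT_7_1 : fiberT 7 1 = -1 := rfl
@[simp] lemma fiberT_7_2 : fiberT 7 2 = -1 := rfl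
@[simp] lemma fiberT_7_3 : fiberT 7 3 = -1 := rfl
@[simp] lemma fiberT_7_4 : fiberT 7 4 = 0 := rfl
@[simp] lemma fiberT_7_5 : fiberT 7 5 = -1 := rfl
@[simp] lemma fiberT_7_6 : fiberT 7 6 = 0 := rfl
@[simp] lemma fiberT_8_0 : fiberT 8 0 = 2 := rfl
@[simp] lemma fiberT_8_1 : fiberT 8 1 = -1 := rfl
@[simp] lemma fiberT_8_2 : fiberT 8 2 = -1 := rfl
@[simp] lemma fiberT_8_3 : fiberT 8 3 = -1 := rfl
@[simp] lemma fiberT_8_4 : fiberT 8 4 = 0 := rfl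
@[simp] lemma fiberT_8_5 : fiberT 8 5 = 0 := rfl
@[simp] lemma fiberT_8_6 : fiberT 8 6 = -1 := rfl
@[simp] lemma fiberT_9_0 : fiberT 9 0 = 2 := rfl
@[simp] lemma fiberT_9_1 : fiberT 9 1 = -1 := rfl
@[simp] lemma fiberT_9_2 : fiberT 9 2 = -1 := rfl
@[simp] lemma fiberT_9_3 : fiberT 9 3 = 0 := rfl
@[simp] lemma fiberT_9_4 : fiberT 9 4 = -1 := rfl
@[simp] lemma fiberT_9_5 : fiberT 9 5 = -1 := rfl
@[simp] lemma fiberT_9_6 : fiberT 9 6 = 0 := rfl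
@[simp] lemma fiberT_10_0 : fiberT 10 0 = 2 := rfl
@[simp] lemma fiberT_10_1 : fiberT 10 1 = -1 := rfl
@[simp] lemma fiberT_10_2 : fiberT 10 2 = -1 := rfl
@[simp] lemma fiberT_10_3 : fiberT 10 3 = 0 := rfl
@[simp] lemma fiberT_10_4 : fiberT 10 4 = -1 := rfl
@[simp] lemma fiberT_10_5 : fiberT 10 5 = 0 := rfl
@[simp] lemma fiberT_10_6 : fiberT 10 6 = -1 := rfl
@[simp] lemma fiberT_11_0 : fiberT 11 0 = 2 := rfl
@[simp] lemma fiberT_11_1 : fiberT 11 1 = -1 := rfl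
@[simp] lemma fiberT_11_2 : fiberT 11 2 = -1 := rfl
@[simp] lemma fiberT_11_3 : fiberT 11 3 = 0 := rfl
@[simp] lemma fiberT_11_4 : fiberT 11 4 = 0 := rfl
@[simp] lemma fiberT_11_5 : fiberT 11 5 = -1 := rfl
@[simp] lemma fiberT_11_6 : fiberT 11 6 = -1 := rfl
@[simp] lemma fiberT_12_0 : fiberT 12 0 = 2 := rfl
@[simp] lemma fiberT_12_1 : fiberT 12 1 = -1 := rfl
@[simp] lemma fiberT_12_2 : fiberT 12 2 = 0 := rfl
@[simp] lemma fiberT_12_3 : fiberT 12 3 = -1 := rfl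
@[simp] lemma fiberT_12_4 : fiberT 12 4 = -1 := rfl
@[simp] lemma fiberT_12_5 : fiberT 12 5 = -1 := rfl
@[simp] lemma fiberT_12_6 : fiberT 12 6 = 0 := rfl
@[simp] lemma fiberT_13_0 : fiberT 13 0 = 2 := rfl
@[simp] lemma fiberT_13_1 : fiberT 13 1 = -1 := rfl
@[simp] lemma fiberT_13_2 : fiberT 13 2 = 0 := rfl
@[simp] lemma fiberT_13_3 : fiberT 13 3 = -1 := rfl
@[simp] lemma fiberT_13_4 : fiberT 13 4 = -1 := rfl
@[simp] lemma fiberT_13_5 : fiberT 13 5 = 0 := rfl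
@[simp] lemma fiberT_13_6 : fiberT 13 6 = -1 := rfl
@[simp] lemma fiberT_14_0 : fiberT 14 0 = 2 := rfl
@[simp] lemma fiberT_14_1 : fiberT 14 1 = -1 := rfl
@[simp] lemma fiberT_14_2 : fiberT 14 2 = 0 := rfl
@[simp] lemma fiberT_14_3 : fiberT 14 3 = -1 := rfl
@[simp] lemma fiberT_14_4 : fiberT 14 4 = 0 := rfl
@[simp] lemma fiberT_14_5 : fiberT 14 5 = -1 := rfl
@[simp] lemma fiberT_14_6 : fiberT 14 6 = -1 := rfl
@[simp] lemma fiberT_15_0 : fiberT 15 0 = 2 := rfl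
@[simp] lemma fiberT_15_1 : fiberT 15 1 = -1 := rfl
@[simp] lemma fiberT_15_2 : fiberT 15 2 = 0 := rfl
@[simp] lemma fiberT_15_3 : fiberT 15 3 = 0 := rfl
@[simp] lemma fiberT_15_4 : fiberT 15 4 = -1 := rfl
@[simp] lemma fiberT_15_5 : fiberT 15 5 = -1 := rfl
@[simp] lemma fiberT_15_6 : fiberT 15 6 = -1 := rfl
@[simp] lemma fiberT_16_0 : fiberT 16 0 = 2 := rfl
@[simp] lemma fiberT_16_1 : fiberT 16 1 = 0 := rfl
@[simp] lemma fiberT_16_2 : fiberT 16 2 = -1 := rfl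
@[simp] lemma fiberT_16_3 : fiberT 16 3 = -1 := rfl
@[simp] lemma fiberT_16_4 : fiberT 16 4 = -1 := rfl
@[simp] lemma fiberT_16_5 : fiberT 16 5 = -1 := rfl
@[simp] lemma fiberT_16_6 : fiberT 16 6 = 0 := rfl
@[simp] lemma fiberT_17_0 : fiberT 17 0 = 2 := rfl
@[simp] lemma fiberT_17_1 : fiberT 17 1 = 0 := rfl
@[simp] lemma fiberT_17_2 : fiberT 17 2 = -1 := rfl
@[simp] lemma fiberT_17_3 : fiberT 17 3 = -1 := rfl
@[simp] lemma fiberT_17_4 : fiberT 17 4 = -1 := rfl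
@[simp] lemma fiberT_17_5 : fiberT 17 5 = 0 := rfl
@[simp] lemma fiberT_17_6 : fiberT 17 6 = -1 := rfl
@[simp] lemma fiberT_18_0 : fiberT 18 0 = 2 := rfl
@[simp] lemma fiberT_18_1 : fiberT 18 1 = 0 := rfl
@[simp] lemma fiberT_18_2 : fiberT 18 2 = -1 := rfl
@[simp] lemma fiberT_18_3 : fiberT 18 3 = -1 := rfl
@[simp] lemma fiberT_18_4 : fiberT 18 4 = 0 := rfl
@[simp] lemma fiberT_18_5 : fiberT 18 5 = -1 := rfl
@[simp] lemma fiberT_18_6 : fiberT 18 6 = -1 := rfl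
@[simp] lemma fiberT_19_0 : fiberT 19 0 = 2 := rfl
@[simp] lemma fiberT_19_1 : fiberT 19 1 = 0 := rfl
@[simp] lemma fiberT_19_2 : fiberT 19 2 = -1 := rfl
@[simp] lemma fiberT_19_3 : fiberT 19 3 = 0 := rfl
@[simp] lemma fiberT_19_4 : fiberT 19 4 = -1 := rfl
@[simp] lemma fiberT_19_5 : fiberT 19 5 = -1 := rfl
@[simp] lemma fiberT_19_6 : fiberT 19 6 = -1 := rfl
@[simp] lemma fiberT_20_0 : fiberT 20 0 = 2 := rfl
@[simp] lemma fiberT_20_1 : fiberT 20 1 = 0 := rfl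
@[simp] lemma fiberT_20_2 : fiberT 20 2 = 0 := rfl
@[simp] lemma fiberT_20_3 : fiberT 20 3 = -1 := rfl
@[simp] lemma fiberT_20_4 : fiberT 20 4 = -1 := rfl
@[simp] lemma fiberT_20_5 : fiberT 20 5 = -1 := rfl
@[simp] lemma fiberT_20_6 : fiberT 20 6 = -1 := rfl
@[simp] lemma fiberT_21_0 : fiberT 21 0 = 3 := rfl
@[simp] lemma fiberT_21_1 : fiberT 21 1 = -2 := rfl
@[simp] lemma fiberT_21_2 : fiberT 21 2 = -1 := rfl
@[simp] lemma fiberT_21_3 : fiberT 21 3 = -1 := rfl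
@[simp] lemma fiberT_21_4 : fiberT 21 4 = -1 := rfl
@[simp] lemma fiberT_21_5 : fiberT 21 5 = -1 := rfl
@[simp] lemma fiberT_21_6 : fiberT 21 6 = -1 := rfl
@[simp] lemma fiberT_22_0 : fiberT 22 0 = 3 := rfl
@[simp] lemma fiberT_22_1 : fiberT 22 1 = -1 := rfl
@[simp] lemma fiberT_22_2 : fiberT 22 2 = -2 := rfl
@[simp] lemma fiberT_22_3 : fiberT 22 3 = -1 := rfl
@[simp] lemma fiberT_22_4 : fiberT 22 4 = -1 := rfl
@[simp] lemma fiberT_22_5 : fiberT 22 5 = -1 := rfl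
@[simp] lemma fiberT_22_6 : fiberT 22 6 = -1 := rfl
@[simp] lemma fiberT_23_0 : fiberT 23 0 = 3 := rfl
@[simp] lemma fiberT_23_1 : fiberT 23 1 = -1 := rfl
@[simp] lemma fiberT_23_2 : fiberT 23 2 = -1 := rfl
@[simp] lemma fiberT_23_3 : fiberT 23 3 = -2 := rfl
@[simp] lemma fiberT_23_4 : fiberT 23 4 = -1 := rfl
@[simp] lemma fiberT_23_5 : fiberT 23 5 = -1 := rfl
@[simp] lemma fiberT_23_6 : fiberT 23 6 = -1 := rfl
@[simp] lemma fiberT_24_0 : fiberT 24 0 = 3 := rfl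
@[simp] lemma fiberT_24_1 : fiberT 24 1 = -1 := rfl
@[simp] lemma fiberT_24_2 : fiberT 24 2 = -1 := rfl
@[simp] lemma fiberT_24_3 : fiberT 24 3 = -1 := rfl
@[simp] lemma fiberT_24_4 : fiberT 24 4 = -2 := rfl
@[simp] lemma fiberT_24_5 : fiberT 24 5 = -1 := rfl
@[simp] lemma fiberT_24_6 : fiberT 24 6 = -1 := rfl
@[simp] lemma fiberT_25_0 : fiberT 25 0 = 3 := rfl
@[simp] lemma fiberT_25_1 : fiberT 25 1 = -1 := rfl
@[simp] lemma fiberT_25_2 : fiberT 25 2 = -1 := rfl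
@[simp] lemma fiberT_25_3 : fiberT 25 3 = -1 := rfl
@[simp] lemma fiberT_25_4 : fiberT 25 4 = -1 := rfl
@[simp] lemma fiberT_25_5 : fiberT 25 5 = -2 := rfl
@[simp] lemma fiberT_25_6 : fiberT 25 6 = -1 := rfl
@[simp] lemma fiberT_26_0 : fiberT 26 0 = 3 := rfl
@[simp] lemma fiberT_26_1 : fiberT 26 1 = -1 := rfl
@[simp] lemma fiberT_26_2 : fiberT 26 2 = -1 := rfl
@[simp] lemma fiberT_26_3 : fiberT 26 3 = -1 := rfl
@[simp] lemma fiberT_26_4 : fiberT 26 4 = -1 := rfl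
@[simp] lemma fiberT_26_5 : fiberT 26 5 = -1 := rfl
@[simp] lemma fiberT_26_6 : fiberT 26 6 = -2 := rfl

@[simp] lemma CT_0_0 : CT 0 0 = 3 := rfl
@[simp] lemma CT_0_1 : CT 0 1 = -1 := rfl
@[simp] lemma CT_0_2 : CT 0 2 = -1 := rfl
@[simp] lemma CT_0_3 : CT 0 3 = -1 := rfl
@[simp] lemma CT_0_4 : CT 0 4 = -1 := rfl
@[simp] lemma CT_0_5 : CT 0 5 = -1 := rfl
@[simp] lemma CT_0_6 : CT 0 6 = 0 := rfl
@[simp] lemma CT_1_0 : CT 1 0 = 3 := rfl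
@[simp] lemma CT_1_1 : CT 1 1 = -1 := rfl
@[simp] lemma CT_1_2 : CT 1 2 = -1 := rfl
@[simp] lemma CT_1_3 : CT 1 3 = -1 := rfl
@[simp] lemma CT_1_4 : CT 1 4 = -1 := rfl
@[simp] lemma CT_1_5 : CT 1 5 = 0 := rfl
@[simp] lemma CT_1_6 : CT 1 6 = -1 := rfl
@[simp] lemma CT_2_0 : CT 2 0 = 3 := rfl
@[simp] lemma CT_2_1 : CT 2 1 = -1 := rfl
@[simp] lemma CT_2_2 : CT 2 2 = -1 := rfl
@[simp] lemma CT_2_3 : CT 2 3 = -1 := rfl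
@[simp] lemma CT_2_4 : CT 2 4 = 0 := rfl
@[simp] lemma CT_2_5 : CT 2 5 = -1 := rfl
@[simp] lemma CT_2_6 : CT 2 6 = -1 := rfl
@[simp] lemma CT_3_0 : CT 3 0 = 3 := rfl
@[simp] lemma CT_3_1 : CT 3 1 = -1 := rfl
@[simp] lemma CT_3_2 : CT 3 2 = -1 := rfl
@[simp] lemma CT_3_3 : CT 3 3 = 0 := rfl
@[simp] lemma CT_3_4 : CT 3 4 = -1 := rfl
@[simp] lemma CT_3_5 : CT 3 5 = -1 := rfl
@[simp] lemma CT_3_6 : CT 3 6 = -1 := rfl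
@[simp] lemma CT_4_0 : CT 4 0 = 3 := rfl
@[simp] lemma CT_4_1 : CT 4 1 = -1 := rfl
@[simp] lemma CT_4_2 : CT 4 2 = 0 := rfl
@[simp] lemma CT_4_3 : CT 4 3 = -1 := rfl
@[simp] lemma CT_4_4 : CT 4 4 = -1 := rfl
@[simp] lemma CT_4_5 : CT 4 5 = -1 := rfl
@[simp] lemma CT_4_6 : CT 4 6 = -1 := rfl
@[simp] lemma CT_5_0 : CT 5 0 = 3 := rfl
@[simp] lemma CT_5_1 : CT 5 1 = 0 := rfl
@[simp] lemma CT_5_2 : CT 5 2 = -1 := rfl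
@[simp] lemma CT_5_3 : CT 5 3 = -1 := rfl
@[simp] lemma CT_5_4 : CT 5 4 = -1 := rfl
@[simp] lemma CT_5_5 : CT 5 5 = -1 := rfl
@[simp] lemma CT_5_6 : CT 5 6 = -1 := rfl
@[simp] lemma CT_6_0 : CT 6 0 = 4 := rfl
@[simp] lemma CT_6_1 : CT 6 1 = -2 := rfl
@[simp] lemma CT_6_2 : CT 6 2 = -2 := rfl
@[simp] lemma CT_6_3 : CT 6 3 = -1 := rfl
@[simp] lemma CT_6_4 : CT 6 4 = -1 := rfl
@[simp] lemma CT_6_5 : CT 6 5 = -1 := rfl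
@[simp] lemma CT_6_6 : CT 6 6 = -1 := rfl
@[simp] lemma CT_7_0 : CT 7 0 = 4 := rfl
@[simp] lemma CT_7_1 : CT 7 1 = -2 := rfl
@[simp] lemma CT_7_2 : CT 7 2 = -1 := rfl
@[simp] lemma CT_7_3 : CT 7 3 = -2 := rfl
@[simp] lemma CT_7_4 : CT 7 4 = -1 := rfl
@[simp] lemma CT_7_5 : CT 7 5 = -1 := rfl
@[simp] lemma CT_7_6 : CT 7 6 = -1 := rfl
@[simp] lemma CT_8_0 : CT 8 0 = 4 := rfl
@[simp] lemma CT_8_1 : CT 8 1 = -2 := rfl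
@[simp] lemma CT_8_2 : CT 8 2 = -1 := rfl
@[simp] lemma CT_8_3 : CT 8 3 = -1 := rfl
@[simp] lemma CT_8_4 : CT 8 4 = -2 := rfl
@[simp] lemma CT_8_5 : CT 8 5 = -1 := rfl
@[simp] lemma CT_8_6 : CT 8 6 = -1 := rfl
@[simp] lemma CT_9_0 : CT 9 0 = 4 := rfl
@[simp] lemma CT_9_1 : CT 9 1 = -2 := rfl
@[simp] lemma CT_9_2 : CT 9 2 = -1 := rfl
@[simp] lemma CT_9_3 : CT 9 3 = -1 := rfl
@[simp] lemma CT_9_4 : CT 9 4 = -1 := rfl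
@[simp] lemma CT_9_5 : CT 9 5 = -2 := rfl
@[simp] lemma CT_9_6 : CT 9 6 = -1 := rfl
@[simp] lemma CT_10_0 : CT 10 0 = 4 := rfl
@[simp] lemma CT_10_1 : CT 10 1 = -2 := rfl
@[simp] lemma CT_10_2 : CT 10 2 = -1 := rfl
@[simp] lemma CT_10_3 : CT 10 3 = -1 := rfl
@[simp] lemma CT_10_4 : CT 10 4 = -1 := rfl
@[simp] lemma CT_10_5 : CT 10 5 = -1 := rfl
@[simp] lemma CT_10_6 : CT 10 6 = -2 := rfl
@[simp] lemma CT_11_0 : CT 11 0 = 4 := rfl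
@[simp] lemma CT_11_1 : CT 11 1 = -1 := rfl
@[simp] lemma CT_11_2 : CT 11 2 = -2 := rfl
@[simp] lemma CT_11_3 : CT 11 3 = -2 := rfl
@[simp] lemma CT_11_4 : CT 11 4 = -1 := rfl
@[simp] lemma CT_11_5 : CT 11 5 = -1 := rfl
@[simp] lemma CT_11_6 : CT 11 6 = -1 := rfl
@[simp] lemma CT_12_0 : CT 12 0 = 4 := rfl
@[simp] lemma CT_12_1 : CT 12 1 = -1 := rfl
@[simp] lemma CT_12_2 : CT 12 2 = -2 := rfl
@[simp] lemma CT_12_3 : CT 12 3 = -1 := rfl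
@[simp] lemma CT_12_4 : CT 12 4 = -2 := rfl
@[simp] lemma CT_12_5 : CT 12 5 = -1 := rfl
@[simp] lemma CT_12_6 : CT 12 6 = -1 := rfl
@[simp] lemma CT_13_0 : CT 13 0 = 4 := rfl
@[simp] lemma CT_13_1 : CT 13 1 = -1 := rfl
@[simp] lemma CT_13_2 : CT 13 2 = -2 := rfl
@[simp] lemma CT_13_3 : CT 13 3 = -1 := rfl
@[simp] lemma CT_13_4 : CT 13 4 = -1 := rfl
@[simp] lemma CT_13_5 : CT 13 5 = -2 := rfl
@[simp] lemma CT_13_6 : CT 13 6 = -1 := rfl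
@[simp] lemma CT_14_0 : CT 14 0 = 4 := rfl
@[simp] lemma CT_14_1 : CT 14 1 = -1 := rfl
@[simp] lemma CT_14_2 : CT 14 2 = -2 := rfl
@[simp] lemma CT_14_3 : CT 14 3 = -1 := rfl
@[simp] lemma CT_14_4 : CT 14 4 = -1 := rfl
@[simp] lemma CT_14_5 : CT 14 5 = -1 := rfl
@[simp] lemma CT_14_6 : CT 14 6 = -2 := rfl
@[simp] lemma CT_15_0 : CT 15 0 = 4 := rfl
@[simp] lemma CT_15_1 : CT 15 1 = -1 := rfl
@[simp] lemma CT_15_2 : CT 15 2 = -1 := rfl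
@[simp] lemma CT_15_3 : CT 15 3 = -2 := rfl
@[simp] lemma CT_15_4 : CT 15 4 = -2 := rfl
@[simp] lemma CT_15_5 : CT 15 5 = -1 := rfl
@[simp] lemma CT_15_6 : CT 15 6 = -1 := rfl
@[simp] lemma CT_16_0 : CT 16 0 = 4 := rfl
@[simp] lemma CT_16_1 : CT 16 1 = -1 := rfl
@[simp] lemma CT_16_2 : CT 16 2 = -1 := rfl
@[simp] lemma CT_16_3 : CT 16 3 = -2 := rfl
@[simp] lemma CT_16_4 : CT 16 4 = -1 := rfl
@[simp] lemma CT_16_5 : CT 16 5 = -2 := rfl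
@[simp] lemma CT_16_6 : CT 16 6 = -1 := rfl
@[simp] lemma CT_17_0 : CT 17 0 = 4 := rfl
@[simp] lemma CT_17_1 : CT 17 1 = -1 := rfl
@[simp] lemma CT_17_2 : CT 17 2 = -1 := rfl
@[simp] lemma CT_17_3 : CT 17 3 = -2 := rfl
@[simp] lemma CT_17_4 : CT 17 4 = -1 := rfl
@[simp] lemma CT_17_5 : CT 17 5 = -1 := rfl
@[simp] lemma CT_17_6 : CT 17 6 = -2 := rfl
@[simp] lemma CT_18_0 : CT 18 0 = 4 := rfl
@[simp] lemma CT_18_1 : CT 18 1 = -1 := rfl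
@[simp] lemma CT_18_2 : CT 18 2 = -1 := rfl
@[simp] lemma CT_18_3 : CT 18 3 = -1 := rfl
@[simp] lemma CT_18_4 : CT 18 4 = -2 := rfl
@[simp] lemma CT_18_5 : CT 18 5 = -2 := rfl
@[simp] lemma CT_18_6 : CT 18 6 = -1 := rfl
@[simp] lemma CT_19_0 : CT 19 0 = 4 := rfl
@[simp] lemma CT_19_1 : CT 19 1 = -1 := rfl
@[simp] lemma CT_19_2 : CT 19 2 = -1 := rfl
@[simp] lemma CT_19_3 : CT 19 3 = -1 := rfl
@[simp] lemma CT_19_4 : CT 19 4 = -2 := rfl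
@[simp] lemma CT_19_5 : CT 19 5 = -1 := rfl
@[simp] lemma CT_19_6 : CT 19 6 = -2 := rfl
@[simp] lemma CT_20_0 : CT 20 0 = 4 := rfl
@[simp] lemma CT_20_1 : CT 20 1 = -1 := rfl
@[simp] lemma CT_20_2 : CT 20 2 = -1 := rfl
@[simp] lemma CT_20_3 : CT 20 3 = -1 := rfl
@[simp] lemma CT_20_4 : CT 20 4 = -1 := rfl
@[simp] lemma CT_20_5 : CT 20 5 = -2 := rfl
@[simp] lemma CT_20_6 : CT 20 6 = -2 := rfl
@[simp] lemma CT_21_0 : CT 21 0 = 5 := rfl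
@[simp] lemma CT_21_1 : CT 21 1 = -2 := rfl
@[simp] lemma CT_21_2 : CT 21 2 = -2 := rfl
@[simp] lemma CT_21_3 : CT 21 3 = -2 := rfl
@[simp] lemma CT_21_4 : CT 21 4 = -2 := rfl
@[simp] lemma CT_21_5 : CT 21 5 = -2 := rfl
@[simp] lemma CT_21_6 : CT 21 6 = -1 := rfl
@[simp] lemma CT_22_0 : CT 22 0 = 5 := rfl
@[simp] lemma CT_22_1 : CT 22 1 = -2 := rfl
@[simp] lemma CT_22_2 : CT 22 2 = -2 := rfl
@[simp] lemma CT_22_3 : CT 22 3 = -2 := rfl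
@[simp] lemma CT_22_4 : CT 22 4 = -2 := rfl
@[simp] lemma CT_22_5 : CT 22 5 = -1 := rfl
@[simp] lemma CT_22_6 : CT 22 6 = -2 := rfl
@[simp] lemma CT_23_0 : CT 23 0 = 5 := rfl
@[simp] lemma CT_23_1 : CT 23 1 = -2 := rfl
@[simp] lemma CT_23_2 : CT 23 2 = -2 := rfl
@[simp] lemma CT_23_3 : CT 23 3 = -2 := rfl
@[simp] lemma CT_23_4 : CT 23 4 = -1 := rfl
@[simp] lemma CT_23_5 : CT 23 5 = -2 := rfl
@[simp] lemma CT_23_6 : CT 23 6 = -2 := rfl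
@[simp] lemma CT_24_0 : CT 24 0 = 5 := rfl
@[simp] lemma CT_24_1 : CT 24 1 = -2 := rfl
@[simp] lemma CT_24_2 : CT 24 2 = -2 := rfl
@[simp] lemma CT_24_3 : CT 24 3 = -1 := rfl
@[simp] lemma CT_24_4 : CT 24 4 = -2 := rfl
@[simp] lemma CT_24_5 : CT 24 5 = -2 := rfl
@[simp] lemma CT_24_6 : CT 24 6 = -2 := rfl
@[simp] lemma CT_25_0 : CT 25 0 = 5 := rfl
@[simp] lemma CT_25_1 : CT 25 1 = -2 := rfl
@[simp] lemma CT_25_2 : CT 25 2 = -1 := rfl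
@[simp] lemma CT_25_3 : CT 25 3 = -2 := rfl
@[simp] lemma CT_25_4 : CT 25 4 = -2 := rfl
@[simp] lemma CT_25_5 : CT 25 5 = -2 := rfl
@[simp] lemma CT_25_6 : CT 25 6 = -2 := rfl
@[simp] lemma CT_26_0 : CT 26 0 = 5 := rfl
@[simp] lemma CT_26_1 : CT 26 1 = -1 := rfl
@[simp] lemma CT_26_2 : CT 26 2 = -2 := rfl
@[simp] lemma CT_26_3 : CT 26 3 = -2 := rfl
@[simp] lemma CT_26_4 : CT 26 4 = -2 := rfl
@[simp] lemma CT_26_5 : CT 26 5 = -2 := rfl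
@[simp] lemma CT_26_6 : CT 26 6 = -2 := rfl

def lineTuples : List (ℤ×ℤ×ℤ×ℤ×ℤ×ℤ×ℤ) := [(0, 0, 0, 0, 0, 0, 1), (0, 0, 0, 0, 0, 1, 0), (0, 0, 0, 0, 1, 0, 0), (0, 0, 0, 1, 0, 0, 0), (0, 0, 1, 0, 0, 0, 0), (0, 1, 0, 0, 0, 0, 0), (1, -1, -1, 0, 0, 0, 0), (1, -1, 0, -1, 0, 0, 0), (1, -1, 0, 0, -1, 0, 0), (1, -1, 0, 0, 0, -1, 0), (1, -1, 0, 0, 0, 0, -1), (1, 0, -1, -1, 0, 0, 0), (1, 0, -1, 0, -1, 0, 0), (1, 0, -1, 0, 0, -1, 0), (1, 0, -1, 0, 0, 0, -1), (1, 0, 0, -1, -1, 0, 0), (1, 0, 0, -1, 0, -1, 0), (1, 0, 0, -1, 0, 0, -1), (1, 0, 0, 0, -1, -1, 0), (1, 0, 0, 0, -1, 0, -1), (1, 0, 0, 0, 0, -1, -1), (2, -1, -1, -1, -1, -1, 0), (2, -1, -1, -1, -1, 0, -1), (2, -1, -1, -1, 0, -1, -1), (2, -1, -1, 0, -1, -1,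 -1), (2, -1, 0, -1, -1, -1, -1), (2, 0, -1, -1, -1, -1, -1)]

lemma lineEnum : ∀ a ∈ Finset.Icc (0:ℤ) 2, ∀ b ∈ Finset.Icc (-1:ℤ) 1, ∀ c ∈ Finset.Icc (-1:ℤ) 1, ∀ d ∈ Finset.Icc (-1:ℤ) 1, ∀ e ∈ Finset.Icc (-1:ℤ) 1, ∀ f ∈ Finset.Icc (-1:ℤ) 1, ∀ g ∈ Finset.Icc (-1:ℤ) 1,
    b + c + d + e + f + g = 1 - 3*a → b*b + c*c + d*d + e*e + f*f + g*g = a*a + 1 →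
    (a, b, c, d, e, f, g) ∈ lineTuples := by decide

lemma lineTupMem : ∀ t ∈ lineTuples, ∃ k ∈ Finset.range 27, lineT k = fromTup t := by
  intro t ht
  fin_cases ht
  · exact ⟨0, by norm_num, rfl⟩
  · exact ⟨1, by norm_num, rfl⟩
  · exact ⟨2, by norm_num, rfl⟩
  · exact ⟨3, by norm_num, rfl⟩
  · exact ⟨4, by norm_num, rfl⟩
  · exact ⟨5, by norm_num, rfl⟩
  · exact ⟨6, by norm_num, rfl⟩
  · exact ⟨7, by norm_num, rfl⟩
  · exact ⟨8, by norm_num, rfl⟩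
  · exact ⟨9, by norm_num, rfl⟩
  · exact ⟨10, by norm_num, rfl⟩
  · exact ⟨11, by norm_num, rfl⟩
  · exact ⟨12, by norm_num, rfl⟩
  · exact ⟨13, by norm_num, rfl⟩
  · exact ⟨14, by norm_num, rfl⟩
  · exact ⟨15, by norm_num, rfl⟩
  · exact ⟨16, by norm_num, rfl⟩
  · exact ⟨17, by norm_num, rfl⟩
  · exact ⟨18, by norm_num, rfl⟩
  · exact ⟨19, by norm_num, rfl⟩
  · exact ⟨20, by norm_num, rfl⟩
  · exact ⟨21, by norm_num, rfl⟩
  · exact ⟨22, by norm_num, rfl⟩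
  · exact ⟨23, by norm_num, rfl⟩
  · exact ⟨24, by norm_num, rfl⟩
  · exact ⟨25, by norm_num, rfl⟩
  · exact ⟨26, by norm_num, rfl⟩

lemma lineChar (x : Lam) : (IsLine x) ↔ ∃ k ∈ Finset.range 27, lineT k = x := by
  constructor
  · rintro ⟨h1, h2⟩
    rw [ip_expand] at h1 h2
    simp only [Kc_0, Kc_1, Kc_2, Kc_3, Kc_4, Kc_5, Kc_6] at h2
    have e1 : x 1 + x 2 + x 3 + x 4 + x 5 + x 6 = 1 - 3*(x 0) := by linarith
    have e2 : x 1 * x 1 + x 2 * x 2 + x 3 * x 3 + x 4 * x 4 + x 5 * x 5 + x 6 * x 6 = (x 0)*(x 0) + 1 := by linarith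
    have keyA : (x 1 - x 2)^2 + (x 1 - x 3)^2 + (x 1 - x 4)^2 + (x 1 - x 5)^2 + (x 1 - x 6)^2 + (x 2 - x 3)^2 + (x 2 - x 4)^2 + (x 2 - x 5)^2 + (x 2 - x 6)^2 + (x 3 - x 4)^2 + (x 3 - x 5)^2 + (x 3 - x 6)^2 + (x 4 - x 5)^2 + (x 4 - x 6)^2 + (x 5 - x 6)^2 = 6*((x 0)*(x 0) + 1) - (1 - 3*(x 0))^2 := by
      linear_combination 6*e2 - ((x 1 + x 2 + x 3 + x 4 + x 5 + x 6) + (1 - 3*(x 0)))*e1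
    have hA : (0:ℤ) ≤ 6*((x 0)*(x 0) + 1) - (1 - 3*(x 0))^2 := by rw [← keyA]; positivity
    obtain ⟨ha1, ha2⟩ := line_bndA hA
    have e2_1 : x 2 * x 2 + x 3 * x 3 + x 4 * x 4 + x 5 * x 5 + x 6 * x 6 = ((x 0)*(x 0) + 1) - x 1 * x 1 := by linarith
    have keyB_1 : (x 2 - x 3)^2 + (x 2 - x 4)^2 + (x 2 - x 5)^2 + (x 2 - x 6)^2 + (x 3 - x 4)^2 + (x 3 - x 5)^2 + (x 3 - x 6)^2 + (x 4 - x 5)^2 + (x 4 - x 6)^2 + (x 5 - x 6)^2 = 5*(((x 0)*(x 0) + 1) - x 1 * x 1) - ((1 - 3*(x 0)) - x 1)^2 := by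
      linear_combination 5*e2_1 - ((x 2 + x 3 + x 4 + x 5 + x 6) + ((1 - 3*(x 0)) - x 1))*(by linarith : x 2 + x 3 + x 4 + x 5 + x 6 = (1 - 3*(x 0)) - x 1)
    have hB_1 : (0:ℤ) ≤ 5*(((x 0)*(x 0) + 1) - x 1 * x 1) - ((1 - 3*(x 0)) - x 1)^2 := by rw [← keyB_1]; positivity
    obtain ⟨hlo_1, hhi_1⟩ := line_bndB hB_1
    have e2_2 : x 1 * x 1 + x 3 * x 3 + x 4 * x 4 + x 5 * x 5 + x 6 * x 6 = ((x 0)*(x 0) + 1) - x 2 * x 2 := by linarith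
    have keyB_2 : (x 1 - x 3)^2 + (x 1 - x 4)^2 + (x 1 - x 5)^2 + (x 1 - x 6)^2 + (x 3 - x 4)^2 + (x 3 - x 5)^2 + (x 3 - x 6)^2 + (x 4 - x 5)^2 + (x 4 - x 6)^2 + (x 5 - x 6)^2 = 5*(((x 0)*(x 0) + 1) - x 2 * x 2) - ((1 - 3*(x 0)) - x 2)^2 := by
      linear_combination 5*e2_2 - ((x 1 + x 3 + x 4 + x 5 + x 6) + ((1 - 3*(x 0)) - x 2))*(by linarith : x 1 + x 3 + x 4 + x 5 + x 6 = (1 - 3*(x 0)) - x 2)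
    have hB_2 : (0:ℤ) ≤ 5*(((x 0)*(x 0) + 1) - x 2 * x 2) - ((1 - 3*(x 0)) - x 2)^2 := by rw [← keyB_2]; positivity
    obtain ⟨hlo_2, hhi_2⟩ := line_bndB hB_2
    have e2_3 : x 1 * x 1 + x 2 * x 2 + x 4 * x 4 + x 5 * x 5 + x 6 * x 6 = ((x 0)*(x 0) + 1) - x 3 * x 3 := by linarith
    have keyB_3 : (x 1 - x 2)^2 + (x 1 - x 4)^2 + (x 1 - x 5)^2 + (x 1 - x 6)^2 + (x 2 - x 4)^2 + (x 2 - x 5)^2 + (x 2 - x 6)^2 + (x 4 - x 5)^2 + (x 4 - x 6)^2 + (x 5 - x 6)^2 = 5*(((x 0)*(x 0) + 1) - x 3 * x 3) - ((1 - 3*(x 0)) - x 3)^2 := by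
      linear_combination 5*e2_3 - ((x 1 + x 2 + x 4 + x 5 + x 6) + ((1 - 3*(x 0)) - x 3))*(by linarith : x 1 + x 2 + x 4 + x 5 + x 6 = (1 - 3*(x 0)) - x 3)
    have hB_3 : (0:ℤ) ≤ 5*(((x 0)*(x 0) + 1) - x 3 * x 3) - ((1 - 3*(x 0)) - x 3)^2 := by rw [← keyB_3]; positivity
    obtain ⟨hlo_3, hhi_3⟩ := line_bndB hB_3
    have e2_4 : x 1 * x 1 + x 2 * x 2 + x 3 * x 3 + x 5 * x 5 + x 6 * x 6 = ((x 0)*(x 0) + 1) - x 4 * x 4 := by linarith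
    have keyB_4 : (x 1 - x 2)^2 + (x 1 - x 3)^2 + (x 1 - x 5)^2 + (x 1 - x 6)^2 + (x 2 - x 3)^2 + (x 2 - x 5)^2 + (x 2 - x 6)^2 + (x 3 - x 5)^2 + (x 3 - x 6)^2 + (x 5 - x 6)^2 = 5*(((x 0)*(x 0) + 1) - x 4 * x 4) - ((1 - 3*(x 0)) - x 4)^2 := by
      linear_combination 5*e2_4 - ((x 1 + x 2 + x 3 + x 5 + x 6) + ((1 - 3*(x 0)) - x 4))*(by linarith : x 1 + x 2 + x 3 + x 5 + x 6 = (1 - 3*(x 0)) - x 4)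
    have hB_4 : (0:ℤ) ≤ 5*(((x 0)*(x 0) + 1) - x 4 * x 4) - ((1 - 3*(x 0)) - x 4)^2 := by rw [← keyB_4]; positivity
    obtain ⟨hlo_4, hhi_4⟩ := line_bndB hB_4
    have e2_5 : x 1 * x 1 + x 2 * x 2 + x 3 * x 3 + x 4 * x 4 + x 6 * x 6 = ((x 0)*(x 0) + 1) - x 5 * x 5 := by linarith
    have keyB_5 : (x 1 - x 2)^2 + (x 1 - x 3)^2 + (x 1 - x 4)^2 + (x 1 - x 6)^2 + (x 2 - x 3)^2 + (x 2 - x 4)^2 + (x 2 - x 6)^2 + (x 3 - x 4)^2 + (x 3 - x 6)^2 + (x 4 - x 6)^2 = 5*(((x 0)*(x 0) + 1) - x 5 * x 5) - ((1 - 3*(x 0)) - x 5)^2 := by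
      linear_combination 5*e2_5 - ((x 1 + x 2 + x 3 + x 4 + x 6) + ((1 - 3*(x 0)) - x 5))*(by linarith : x 1 + x 2 + x 3 + x 4 + x 6 = (1 - 3*(x 0)) - x 5)
    have hB_5 : (0:ℤ) ≤ 5*(((x 0)*(x 0) + 1) - x 5 * x 5) - ((1 - 3*(x 0)) - x 5)^2 := by rw [← keyB_5]; positivity
    obtain ⟨hlo_5, hhi_5⟩ := line_bndB hB_5
    have e2_6 : x 1 * x 1 + x 2 * x 2 + x 3 * x 3 + x 4 * x 4 + x 5 * x 5 = ((x 0)*(x 0) + 1) - x 6 * x 6 := by linarith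
    have keyB_6 : (x 1 - x 2)^2 + (x 1 - x 3)^2 + (x 1 - x 4)^2 + (x 1 - x 5)^2 + (x 2 - x 3)^2 + (x 2 - x 4)^2 + (x 2 - x 5)^2 + (x 3 - x 4)^2 + (x 3 - x 5)^2 + (x 4 - x 5)^2 = 5*(((x 0)*(x 0) + 1) - x 6 * x 6) - ((1 - 3*(x 0)) - x 6)^2 := by
      linear_combination 5*e2_6 - ((x 1 + x 2 + x 3 + x 4 + x 5) + ((1 - 3*(x 0)) - x 6))*(by linarith : x 1 + x 2 + x 3 + x 4 + x 5 = (1 - 3*(x 0)) - x 6)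
    have hB_6 : (0:ℤ) ≤ 5*(((x 0)*(x 0) + 1) - x 6 * x 6) - ((1 - 3*(x 0)) - x 6)^2 := by rw [← keyB_6]; positivity
    obtain ⟨hlo_6, hhi_6⟩ := line_bndB hB_6
    have hmem := lineEnum (x 0) (Finset.mem_Icc.mpr ⟨ha1, ha2⟩) (x 1) (Finset.mem_Icc.mpr ⟨hlo_1, hhi_1⟩) (x 2) (Finset.mem_Icc.mpr ⟨hlo_2, hhi_2⟩) (x 3) (Finset.mem_Icc.mpr ⟨hlo_3, hhi_3⟩) (x 4) (Finset.mem_Icc.mpr ⟨hlo_4, hhi_4⟩) (x 5) (Finset.mem_Icc.mpr ⟨hlo_5, hhi_5⟩) (x 6) (Finset.mem_Icc.mpr ⟨hlo_6, hhi_6⟩) e1 e2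
    obtain ⟨k, hk, hke⟩ := lineTupMem _ hmem
    exact ⟨k, hk, by rw [hke, ← expand_self]⟩
  · rintro ⟨k, hk, rfl⟩
    have hall : ∀ k ∈ Finset.range 27, ip (lineT k) (lineT k) = -1 ∧ ip (lineT k) Kc = -1 := by decide
    exact hall k hk

def fiberTuples : List (ℤ×ℤ×ℤ×ℤ×ℤ×ℤ×ℤ) := [(1, -1, 0, 0, 0, 0, 0), (1, 0, -1, 0, 0, 0, 0), (1, 0, 0, -1, 0, 0, 0), (1, 0, 0, 0, -1, 0, 0), (1, 0, 0, 0, 0, -1, 0), (1, 0, 0, 0, 0, 0, -1), (2, -1, -1, -1, -1, 0, 0), (2, -1, -1, -1, 0, -1, 0), (2, -1, -1, -1, 0, 0, -1), (2, -1, -1, 0, -1, -1, 0), (2, -1, -1, 0, -1, 0, -1), (2, -1, -1, 0, 0, -1, -1), (2, -1, 0, -1, -1, -1, 0), (2, -1, 0, -1, -1, 0, -1), (2, -1, 0, -1, 0, -1, -1), (2, -1, 0, 0, -1, -1, -1), (2, 0, -1, -1, -1, -1, 0), (2, 0, -1, -1, -1, 0, -1), (2, 0, -1, -1, 0, -1,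 -1), (2, 0, -1, 0, -1, -1, -1), (2, 0, 0, -1, -1, -1, -1), (3, -2, -1, -1, -1, -1, -1), (3, -1, -2, -1, -1, -1, -1), (3, -1, -1, -2, -1, -1, -1), (3, -1, -1, -1, -2, -1, -1), (3, -1, -1, -1, -1, -2, -1), (3, -1, -1, -1, -1, -1, -2)]

lemma fiberEnum : ∀ a ∈ Finset.Icc (1:ℤ) 3, ∀ b ∈ Finset.Icc (-2:ℤ) 0, ∀ c ∈ Finset.Icc (-2:ℤ) 0, ∀ d ∈ Finset.Icc (-2:ℤ) 0, ∀ e ∈ Finset.Icc (-2:ℤ) 0, ∀ f ∈ Finset.Icc (-2:ℤ) 0, ∀ g ∈ Finset.Icc (-2:ℤ) 0,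
    b + c + d + e + f + g = 2 - 3*a → b*b + c*c + d*d + e*e + f*f + g*g = a*a →
    (a, b, c, d, e, f, g) ∈ fiberTuples := by decide

lemma fiberTupMem : ∀ t ∈ fiberTuples, ∃ k ∈ Finset.range 27, fiberT k = fromTup t := by
  intro t ht
  fin_cases ht
  · exact ⟨0, by norm_num, rfl⟩
  · exact ⟨1, by norm_num, rfl⟩
  · exact ⟨2, by norm_num, rfl⟩
  · exact ⟨3, by norm_num, rfl⟩
  · exact ⟨4, by norm_num, rfl⟩
  · exact ⟨5, by norm_num, rfl⟩
  · exact ⟨6, by norm_num, rfl⟩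
  · exact ⟨7, by norm_num, rfl⟩
  · exact ⟨8, by norm_num, rfl⟩
  · exact ⟨9, by norm_num, rfl⟩
  · exact ⟨10, by norm_num, rfl⟩
  · exact ⟨11, by norm_num, rfl⟩
  · exact ⟨12, by norm_num, rfl⟩
  · exact ⟨13, by norm_num, rfl⟩
  · exact ⟨14, by norm_num, rfl⟩
  · exact ⟨15, by norm_num, rfl⟩
  · exact ⟨16, by norm_num, rfl⟩
  · exact ⟨17, by norm_num, rfl⟩
  · exact ⟨18, by norm_num, rfl⟩
  · exact ⟨19, by norm_num, rfl⟩
  · exact ⟨20, by norm_num, rfl⟩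
  · exact ⟨21, by norm_num, rfl⟩
  · exact ⟨22, by norm_num, rfl⟩
  · exact ⟨23, by norm_num, rfl⟩
  · exact ⟨24, by norm_num, rfl⟩
  · exact ⟨25, by norm_num, rfl⟩
  · exact ⟨26, by norm_num, rfl⟩

lemma fiberChar (x : Lam) : (IsFiber x) ↔ ∃ k ∈ Finset.range 27, fiberT k = x := by
  constructor
  · rintro ⟨h1, h2⟩
    rw [ip_expand] at h1 h2
    simp only [Kc_0, Kc_1, Kc_2, Kc_3, Kc_4, Kc_5, Kc_6] at h2
    have e1 : x 1 + x 2 + x 3 + x 4 + x 5 + x 6 = 2 - 3*(x 0) := by linarith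
    have e2 : x 1 * x 1 + x 2 * x 2 + x 3 * x 3 + x 4 * x 4 + x 5 * x 5 + x 6 * x 6 = (x 0)*(x 0) := by linarith
    have keyA : (x 1 - x 2)^2 + (x 1 - x 3)^2 + (x 1 - x 4)^2 + (x 1 - x 5)^2 + (x 1 - x 6)^2 + (x 2 - x 3)^2 + (x 2 - x 4)^2 + (x 2 - x 5)^2 + (x 2 - x 6)^2 + (x 3 - x 4)^2 + (x 3 - x 5)^2 + (x 3 - x 6)^2 + (x 4 - x 5)^2 + (x 4 - x 6)^2 + (x 5 - x 6)^2 = 6*((x 0)*(x 0)) - (2 - 3*(x 0))^2 := by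
      linear_combination 6*e2 - ((x 1 + x 2 + x 3 + x 4 + x 5 + x 6) + (2 - 3*(x 0)))*e1
    have hA : (0:ℤ) ≤ 6*((x 0)*(x 0)) - (2 - 3*(x 0))^2 := by rw [← keyA]; positivity
    obtain ⟨ha1, ha2⟩ := fiber_bndA hA
    have e2_1 : x 2 * x 2 + x 3 * x 3 + x 4 * x 4 + x 5 * x 5 + x 6 * x 6 = ((x 0)*(x 0)) - x 1 * x 1 := by linarith
    have keyB_1 : (x 2 - x 3)^2 + (x 2 - x 4)^2 + (x 2 - x 5)^2 + (x 2 - x 6)^2 + (x 3 - x 4)^2 + (x 3 - x 5)^2 + (x 3 - x 6)^2 + (x 4 - x 5)^2 + (x 4 - x 6)^2 + (x 5 - x 6)^2 = 5*(((x 0)*(x 0)) - x 1 * x 1) - ((2 - 3*(x 0)) - x 1)^2 := by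
      linear_combination 5*e2_1 - ((x 2 + x 3 + x 4 + x 5 + x 6) + ((2 - 3*(x 0)) - x 1))*(by linarith : x 2 + x 3 + x 4 + x 5 + x 6 = (2 - 3*(x 0)) - x 1)
    have hB_1 : (0:ℤ) ≤ 5*(((x 0)*(x 0)) - x 1 * x 1) - ((2 - 3*(x 0)) - x 1)^2 := by rw [← keyB_1]; positivity
    obtain ⟨hlo_1, hhi_1⟩ := fiber_bndB hB_1
    have e2_2 : x 1 * x 1 + x 3 * x 3 + x 4 * x 4 + x 5 * x 5 + x 6 * x 6 = ((x 0)*(x 0)) - x 2 * x 2 := by linarith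
    have keyB_2 : (x 1 - x 3)^2 + (x 1 - x 4)^2 + (x 1 - x 5)^2 + (x 1 - x 6)^2 + (x 3 - x 4)^2 + (x 3 - x 5)^2 + (x 3 - x 6)^2 + (x 4 - x 5)^2 + (x 4 - x 6)^2 + (x 5 - x 6)^2 = 5*(((x 0)*(x 0)) - x 2 * x 2) - ((2 - 3*(x 0)) - x 2)^2 := by
      linear_combination 5*e2_2 - ((x 1 + x 3 + x 4 + x 5 + x 6) + ((2 - 3*(x 0)) - x 2))*(by linarith : x 1 + x 3 + x 4 + x 5 + x 6 = (2 - 3*(x 0)) - x 2)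
    have hB_2 : (0:ℤ) ≤ 5*(((x 0)*(x 0)) - x 2 * x 2) - ((2 - 3*(x 0)) - x 2)^2 := by rw [← keyB_2]; positivity
    obtain ⟨hlo_2, hhi_2⟩ := fiber_bndB hB_2
    have e2_3 : x 1 * x 1 + x 2 * x 2 + x 4 * x 4 + x 5 * x 5 + x 6 * x 6 = ((x 0)*(x 0)) - x 3 * x 3 := by linarith
    have keyB_3 : (x 1 - x 2)^2 + (x 1 - x 4)^2 + (x 1 - x 5)^2 + (x 1 - x 6)^2 + (x 2 - x 4)^2 + (x 2 - x 5)^2 + (x 2 - x 6)^2 + (x 4 - x 5)^2 + (x 4 - x 6)^2 + (x 5 - x 6)^2 = 5*(((x 0)*(x 0)) - x 3 * x 3) - ((2 - 3*(x 0)) - x 3)^2 := by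
      linear_combination 5*e2_3 - ((x 1 + x 2 + x 4 + x 5 + x 6) + ((2 - 3*(x 0)) - x 3))*(by linarith : x 1 + x 2 + x 4 + x 5 + x 6 = (2 - 3*(x 0)) - x 3)
    have hB_3 : (0:ℤ) ≤ 5*(((x 0)*(x 0)) - x 3 * x 3) - ((2 - 3*(x 0)) - x 3)^2 := by rw [← keyB_3]; positivity
    obtain ⟨hlo_3, hhi_3⟩ := fiber_bndB hB_3
    have e2_4 : x 1 * x 1 + x 2 * x 2 + x 3 * x 3 + x 5 * x 5 + x 6 * x 6 = ((x 0)*(x 0)) - x 4 * x 4 := by linarith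
    have keyB_4 : (x 1 - x 2)^2 + (x 1 - x 3)^2 + (x 1 - x 5)^2 + (x 1 - x 6)^2 + (x 2 - x 3)^2 + (x 2 - x 5)^2 + (x 2 - x 6)^2 + (x 3 - x 5)^2 + (x 3 - x 6)^2 + (x 5 - x 6)^2 = 5*(((x 0)*(x 0)) - x 4 * x 4) - ((2 - 3*(x 0)) - x 4)^2 := by
      linear_combination 5*e2_4 - ((x 1 + x 2 + x 3 + x 5 + x 6) + ((2 - 3*(x 0)) - x 4))*(by linarith : x 1 + x 2 + x 3 + x 5 + x 6 = (2 - 3*(x 0)) - x 4)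
    have hB_4 : (0:ℤ) ≤ 5*(((x 0)*(x 0)) - x 4 * x 4) - ((2 - 3*(x 0)) - x 4)^2 := by rw [← keyB_4]; positivity
    obtain ⟨hlo_4, hhi_4⟩ := fiber_bndB hB_4
    have e2_5 : x 1 * x 1 + x 2 * x 2 + x 3 * x 3 + x 4 * x 4 + x 6 * x 6 = ((x 0)*(x 0)) - x 5 * x 5 := by linarith
    have keyB_5 : (x 1 - x 2)^2 + (x 1 - x 3)^2 + (x 1 - x 4)^2 + (x 1 - x 6)^2 + (x 2 - x 3)^2 + (x 2 - x 4)^2 + (x 2 - x 6)^2 + (x 3 - x 4)^2 + (x 3 - x 6)^2 + (x 4 - x 6)^2 = 5*(((x 0)*(x 0)) - x 5 * x 5) - ((2 - 3*(x 0)) - x 5)^2 := by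
      linear_combination 5*e2_5 - ((x 1 + x 2 + x 3 + x 4 + x 6) + ((2 - 3*(x 0)) - x 5))*(by linarith : x 1 + x 2 + x 3 + x 4 + x 6 = (2 - 3*(x 0)) - x 5)
    have hB_5 : (0:ℤ) ≤ 5*(((x 0)*(x 0)) - x 5 * x 5) - ((2 - 3*(x 0)) - x 5)^2 := by rw [← keyB_5]; positivity
    obtain ⟨hlo_5, hhi_5⟩ := fiber_bndB hB_5
    have e2_6 : x 1 * x 1 + x 2 * x 2 + x 3 * x 3 + x 4 * x 4 + x 5 * x 5 = ((x 0)*(x 0)) - x 6 * x 6 := by linarith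
    have keyB_6 : (x 1 - x 2)^2 + (x 1 - x 3)^2 + (x 1 - x 4)^2 + (x 1 - x 5)^2 + (x 2 - x 3)^2 + (x 2 - x 4)^2 + (x 2 - x 5)^2 + (x 3 - x 4)^2 + (x 3 - x 5)^2 + (x 4 - x 5)^2 = 5*(((x 0)*(x 0)) - x 6 * x 6) - ((2 - 3*(x 0)) - x 6)^2 := by
      linear_combination 5*e2_6 - ((x 1 + x 2 + x 3 + x 4 + x 5) + ((2 - 3*(x 0)) - x 6))*(by linarith : x 1 + x 2 + x 3 + x 4 + x 5 = (2 - 3*(x 0)) - x 6)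
    have hB_6 : (0:ℤ) ≤ 5*(((x 0)*(x 0)) - x 6 * x 6) - ((2 - 3*(x 0)) - x 6)^2 := by rw [← keyB_6]; positivity
    obtain ⟨hlo_6, hhi_6⟩ := fiber_bndB hB_6
    have hmem := fiberEnum (x 0) (Finset.mem_Icc.mpr ⟨ha1, ha2⟩) (x 1) (Finset.mem_Icc.mpr ⟨hlo_1, hhi_1⟩) (x 2) (Finset.mem_Icc.mpr ⟨hlo_2, hhi_2⟩) (x 3) (Finset.mem_Icc.mpr ⟨hlo_3, hhi_3⟩) (x 4) (Finset.mem_Icc.mpr ⟨hlo_4, hhi_4⟩) (x 5) (Finset.mem_Icc.mpr ⟨hlo_5, hhi_5⟩) (x 6) (Finset.mem_Icc.mpr ⟨hlo_6, hhi_6⟩) e1 e2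
    obtain ⟨k, hk, hke⟩ := fiberTupMem _ hmem
    exact ⟨k, hk, by rw [hke, ← expand_self]⟩
  · rintro ⟨k, hk, rfl⟩
    have hall : ∀ k ∈ Finset.range 27, ip (fiberT k) (fiberT k) = 0 ∧ ip (fiberT k) Kc = -2 := by decide
    exact hall k hk

def CTuples : List (ℤ×ℤ×ℤ×ℤ×ℤ×ℤ×ℤ) := [(3, -1, -1, -1, -1, -1, 0), (3, -1, -1, -1, -1, 0, -1), (3, -1, -1, -1, 0, -1, -1), (3, -1, -1, 0, -1, -1, -1), (3, -1, 0, -1, -1, -1, -1), (3, 0, -1, -1, -1, -1, -1), (4, -2, -2, -1, -1, -1, -1), (4, -2, -1, -2, -1, -1, -1), (4, -2, -1, -1, -2, -1, -1), (4, -2, -1, -1, -1, -2, -1), (4, -2, -1, -1, -1, -1, -2), (4, -1, -2, -2, -1, -1, -1), (4, -1, -2, -1, -2, -1, -1), (4, -1, -2, -1, -1, -2, -1), (4, -1, -2, -1, -1, -1, -2), (4, -1, -1, -2, -2, -1, -1), (4, -1, -1, -2, -1, -2, -1), (4, -1, -1, -2, -1, -1, -2), (4, -1, -1, -1, -2, -2,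 -1), (4, -1, -1, -1, -2, -1, -2), (4, -1, -1, -1, -1, -2, -2), (5, -2, -2, -2, -2, -2, -1), (5, -2, -2, -2, -2, -1, -2), (5, -2, -2, -2, -1, -2, -2), (5, -2, -2, -1, -2, -2, -2), (5, -2, -1, -2, -2, -2, -2), (5, -1, -2, -2, -2, -2, -2)]

lemma CEnum : ∀ a ∈ Finset.Icc (3:ℤ) 5, ∀ b ∈ Finset.Icc (-2:ℤ) 0, ∀ c ∈ Finset.Icc (-2:ℤ) 0, ∀ d ∈ Finset.Icc (-2:ℤ) 0, ∀ e ∈ Finset.Icc (-2:ℤ) 0, ∀ f ∈ Finset.Icc (-2:ℤ) 0, ∀ g ∈ Finset.Icc (-2:ℤ) 0,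
    b + c + d + e + f + g = 4 - 3*a → b*b + c*c + d*d + e*e + f*f + g*g = a*a - 4 →
    (a, b, c, d, e, f, g) ∈ CTuples := by decide

lemma CTupMem : ∀ t ∈ CTuples, ∃ k ∈ Finset.range 27, CT k = fromTup t := by
  intro t ht
  fin_cases ht
  · exact ⟨0, by norm_num, rfl⟩
  · exact ⟨1, by norm_num, rfl⟩
  · exact ⟨2, by norm_num, rfl⟩
  · exact ⟨3, by norm_num, rfl⟩
  · exact ⟨4, by norm_num, rfl⟩
  · exact ⟨5, by norm_num, rfl⟩
  · exact ⟨6, by norm_num, rfl⟩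
  · exact ⟨7, by norm_num, rfl⟩
  · exact ⟨8, by norm_num, rfl⟩
  · exact ⟨9, by norm_num, rfl⟩
  · exact ⟨10, by norm_num, rfl⟩
  · exact ⟨11, by norm_num, rfl⟩
  · exact ⟨12, by norm_num, rfl⟩
  · exact ⟨13, by norm_num, rfl⟩
  · exact ⟨14, by norm_num, rfl⟩
  · exact ⟨15, by norm_num, rfl⟩
  · exact ⟨16, by norm_num, rfl⟩
  · exact ⟨17, by norm_num, rfl⟩
  · exact ⟨18, by norm_num, rfl⟩
  · exact ⟨19, by norm_num, rfl⟩
  · exact ⟨20, by norm_num, rfl⟩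
  · exact ⟨21, by norm_num, rfl⟩
  · exact ⟨22, by norm_num, rfl⟩
  · exact ⟨23, by norm_num, rfl⟩
  · exact ⟨24, by norm_num, rfl⟩
  · exact ⟨25, by norm_num, rfl⟩
  · exact ⟨26, by norm_num, rfl⟩

lemma CChar (x : Lam) : (ip x x = 4 ∧ ip x Kc = -4) ↔ ∃ k ∈ Finset.range 27, CT k = x := by
  constructor
  · rintro ⟨h1, h2⟩
    rw [ip_expand] at h1 h2
    simp only [Kc_0, Kc_1, Kc_2, Kc_3, Kc_4, Kc_5, Kc_6] at h2
    have e1 : x 1 + x 2 + x 3 + x 4 + x 5 + x 6 = 4 - 3*(x 0) := by linarith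
    have e2 : x 1 * x 1 + x 2 * x 2 + x 3 * x 3 + x 4 * x 4 + x 5 * x 5 + x 6 * x 6 = (x 0)*(x 0) - 4 := by linarith
    have keyA : (x 1 - x 2)^2 + (x 1 - x 3)^2 + (x 1 - x 4)^2 + (x 1 - x 5)^2 + (x 1 - x 6)^2 + (x 2 - x 3)^2 + (x 2 - x 4)^2 + (x 2 - x 5)^2 + (x 2 - x 6)^2 + (x 3 - x 4)^2 + (x 3 - x 5)^2 + (x 3 - x 6)^2 + (x 4 - x 5)^2 + (x 4 - x 6)^2 + (x 5 - x 6)^2 = 6*((x 0)*(x 0) - 4) - (4 - 3*(x 0))^2 := by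
      linear_combination 6*e2 - ((x 1 + x 2 + x 3 + x 4 + x 5 + x 6) + (4 - 3*(x 0)))*e1
    have hA : (0:ℤ) ≤ 6*((x 0)*(x 0) - 4) - (4 - 3*(x 0))^2 := by rw [← keyA]; positivity
    obtain ⟨ha1, ha2⟩ := C_bndA hA
    have e2_1 : x 2 * x 2 + x 3 * x 3 + x 4 * x 4 + x 5 * x 5 + x 6 * x 6 = ((x 0)*(x 0) - 4) - x 1 * x 1 := by linarith
    have keyB_1 : (x 2 - x 3)^2 + (x 2 - x 4)^2 + (x 2 - x 5)^2 + (x 2 - x 6)^2 + (x 3 - x 4)^2 + (x 3 - x 5)^2 + (x 3 - x 6)^2 + (x 4 - x 5)^2 + (x 4 - x 6)^2 + (x 5 - x 6)^2 = 5*(((x 0)*(x 0) - 4) - x 1 * x 1) - ((4 - 3*(x 0)) - x 1)^2 := by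
      linear_combination 5*e2_1 - ((x 2 + x 3 + x 4 + x 5 + x 6) + ((4 - 3*(x 0)) - x 1))*(by linarith : x 2 + x 3 + x 4 + x 5 + x 6 = (4 - 3*(x 0)) - x 1)
    have hB_1 : (0:ℤ) ≤ 5*(((x 0)*(x 0) - 4) - x 1 * x 1) - ((4 - 3*(x 0)) - x 1)^2 := by rw [← keyB_1]; positivity
    obtain ⟨hlo_1, hhi_1⟩ := C_bndB hB_1
    have e2_2 : x 1 * x 1 + x 3 * x 3 + x 4 * x 4 + x 5 * x 5 + x 6 * x 6 = ((x 0)*(x 0) - 4) - x 2 * x 2 := by linarith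
    have keyB_2 : (x 1 - x 3)^2 + (x 1 - x 4)^2 + (x 1 - x 5)^2 + (x 1 - x 6)^2 + (x 3 - x 4)^2 + (x 3 - x 5)^2 + (x 3 - x 6)^2 + (x 4 - x 5)^2 + (x 4 - x 6)^2 + (x 5 - x 6)^2 = 5*(((x 0)*(x 0) - 4) - x 2 * x 2) - ((4 - 3*(x 0)) - x 2)^2 := by
      linear_combination 5*e2_2 - ((x 1 + x 3 + x 4 + x 5 + x 6) + ((4 - 3*(x 0)) - x 2))*(by linarith : x 1 + x 3 + x 4 + x 5 + x 6 = (4 - 3*(x 0)) - x 2)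
    have hB_2 : (0:ℤ) ≤ 5*(((x 0)*(x 0) - 4) - x 2 * x 2) - ((4 - 3*(x 0)) - x 2)^2 := by rw [← keyB_2]; positivity
    obtain ⟨hlo_2, hhi_2⟩ := C_bndB hB_2
    have e2_3 : x 1 * x 1 + x 2 * x 2 + x 4 * x 4 + x 5 * x 5 + x 6 * x 6 = ((x 0)*(x 0) - 4) - x 3 * x 3 := by linarith
    have keyB_3 : (x 1 - x 2)^2 + (x 1 - x 4)^2 + (x 1 - x 5)^2 + (x 1 - x 6)^2 + (x 2 - x 4)^2 + (x 2 - x 5)^2 + (x 2 - x 6)^2 + (x 4 - x 5)^2 + (x 4 - x 6)^2 + (x 5 - x 6)^2 = 5*(((x 0)*(x 0) - 4) - x 3 * x 3) - ((4 - 3*(x 0)) - x 3)^2 := by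
      linear_combination 5*e2_3 - ((x 1 + x 2 + x 4 + x 5 + x 6) + ((4 - 3*(x 0)) - x 3))*(by linarith : x 1 + x 2 + x 4 + x 5 + x 6 = (4 - 3*(x 0)) - x 3)
    have hB_3 : (0:ℤ) ≤ 5*(((x 0)*(x 0) - 4) - x 3 * x 3) - ((4 - 3*(x 0)) - x 3)^2 := by rw [← keyB_3]; positivity
    obtain ⟨hlo_3, hhi_3⟩ := C_bndB hB_3
    have e2_4 : x 1 * x 1 + x 2 * x 2 + x 3 * x 3 + x 5 * x 5 + x 6 * x 6 = ((x 0)*(x 0) - 4) - x 4 * x 4 := by linarith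
    have keyB_4 : (x 1 - x 2)^2 + (x 1 - x 3)^2 + (x 1 - x 5)^2 + (x 1 - x 6)^2 + (x 2 - x 3)^2 + (x 2 - x 5)^2 + (x 2 - x 6)^2 + (x 3 - x 5)^2 + (x 3 - x 6)^2 + (x 5 - x 6)^2 = 5*(((x 0)*(x 0) - 4) - x 4 * x 4) - ((4 - 3*(x 0)) - x 4)^2 := by
      linear_combination 5*e2_4 - ((x 1 + x 2 + x 3 + x 5 + x 6) + ((4 - 3*(x 0)) - x 4))*(by linarith : x 1 + x 2 + x 3 + x 5 + x 6 = (4 - 3*(x 0)) - x 4)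
    have hB_4 : (0:ℤ) ≤ 5*(((x 0)*(x 0) - 4) - x 4 * x 4) - ((4 - 3*(x 0)) - x 4)^2 := by rw [← keyB_4]; positivity
    obtain ⟨hlo_4, hhi_4⟩ := C_bndB hB_4
    have e2_5 : x 1 * x 1 + x 2 * x 2 + x 3 * x 3 + x 4 * x 4 + x 6 * x 6 = ((x 0)*(x 0) - 4) - x 5 * x 5 := by linarith
    have keyB_5 : (x 1 - x 2)^2 + (x 1 - x 3)^2 + (x 1 - x 4)^2 + (x 1 - x 6)^2 + (x 2 - x 3)^2 + (x 2 - x 4)^2 + (x 2 - x 6)^2 + (x 3 - x 4)^2 + (x 3 - x 6)^2 + (x 4 - x 6)^2 = 5*(((x 0)*(x 0) - 4) - x 5 * x 5) - ((4 - 3*(x 0)) - x 5)^2 := by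
      linear_combination 5*e2_5 - ((x 1 + x 2 + x 3 + x 4 + x 6) + ((4 - 3*(x 0)) - x 5))*(by linarith : x 1 + x 2 + x 3 + x 4 + x 6 = (4 - 3*(x 0)) - x 5)
    have hB_5 : (0:ℤ) ≤ 5*(((x 0)*(x 0) - 4) - x 5 * x 5) - ((4 - 3*(x 0)) - x 5)^2 := by rw [← keyB_5]; positivity
    obtain ⟨hlo_5, hhi_5⟩ := C_bndB hB_5
    have e2_6 : x 1 * x 1 + x 2 * x 2 + x 3 * x 3 + x 4 * x 4 + x 5 * x 5 = ((x 0)*(x 0) - 4) - x 6 * x 6 := by linarith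
    have keyB_6 : (x 1 - x 2)^2 + (x 1 - x 3)^2 + (x 1 - x 4)^2 + (x 1 - x 5)^2 + (x 2 - x 3)^2 + (x 2 - x 4)^2 + (x 2 - x 5)^2 + (x 3 - x 4)^2 + (x 3 - x 5)^2 + (x 4 - x 5)^2 = 5*(((x 0)*(x 0) - 4) - x 6 * x 6) - ((4 - 3*(x 0)) - x 6)^2 := by
      linear_combination 5*e2_6 - ((x 1 + x 2 + x 3 + x 4 + x 5) + ((4 - 3*(x 0)) - x 6))*(by linarith : x 1 + x 2 + x 3 + x 4 + x 5 = (4 - 3*(x 0)) - x 6)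
    have hB_6 : (0:ℤ) ≤ 5*(((x 0)*(x 0) - 4) - x 6 * x 6) - ((4 - 3*(x 0)) - x 6)^2 := by rw [← keyB_6]; positivity
    obtain ⟨hlo_6, hhi_6⟩ := C_bndB hB_6
    have hmem := CEnum (x 0) (Finset.mem_Icc.mpr ⟨ha1, ha2⟩) (x 1) (Finset.mem_Icc.mpr ⟨hlo_1, hhi_1⟩) (x 2) (Finset.mem_Icc.mpr ⟨hlo_2, hhi_2⟩) (x 3) (Finset.mem_Icc.mpr ⟨hlo_3, hhi_3⟩) (x 4) (Finset.mem_Icc.mpr ⟨hlo_4, hhi_4⟩) (x 5) (Finset.mem_Icc.mpr ⟨hlo_5, hhi_5⟩) (x 6) (Finset.mem_Icc.mpr ⟨hlo_6, hhi_6⟩) e1 e2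
    obtain ⟨k, hk, hke⟩ := CTupMem _ hmem
    exact ⟨k, hk, by rw [hke, ← expand_self]⟩
  · rintro ⟨k, hk, rfl⟩
    have hall : ∀ k ∈ Finset.range 27, ip (CT k) (CT k) = 4 ∧ ip (CT k) Kc = -4 := by decide
    exact hall k hk


lemma vecEq (u v : Lam) (h0 : u 0 = v 0) (h1 : u 1 = v 1) (h2 : u 2 = v 2) (h3 : u 3 = v 3)
    (h4 : u 4 = v 4) (h5 : u 5 = v 5) (h6 : u 6 = v 6) : u = v := by
  funext i; fin_cases i <;> assumption

lemma vec7_0 (a0 a1 a2 a3 a4 a5 a6 : ℤ) : (![a0,a1,a2,a3,a4,a5,a6] : Lam) 0 = a0 := rfl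
lemma vec7_1 (a0 a1 a2 a3 a4 a5 a6 : ℤ) : (![a0,a1,a2,a3,a4,a5,a6] : Lam) 1 = a1 := rfl
lemma vec7_2 (a0 a1 a2 a3 a4 a5 a6 : ℤ) : (![a0,a1,a2,a3,a4,a5,a6] : Lam) 2 = a2 := rfl
lemma vec7_3 (a0 a1 a2 a3 a4 a5 a6 : ℤ) : (![a0,a1,a2,a3,a4,a5,a6] : Lam) 3 = a3 := rfl
lemma vec7_4 (a0 a1 a2 a3 a4 a5 a6 : ℤ) : (![a0,a1,a2,a3,a4,a5,a6] : Lam) 4 = a4 := rfl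
lemma vec7_5 (a0 a1 a2 a3 a4 a5 a6 : ℤ) : (![a0,a1,a2,a3,a4,a5,a6] : Lam) 5 = a5 := rfl
lemma vec7_6 (a0 a1 a2 a3 a4 a5 a6 : ℤ) : (![a0,a1,a2,a3,a4,a5,a6] : Lam) 6 = a6 := rfl

lemma hinjL : ∀ x ∈ Finset.range 27, ∀ y ∈ Finset.range 27, lineT x = lineT y → x = y := by decide
lemma hinjF : ∀ x ∈ Finset.range 27, ∀ y ∈ Finset.range 27, fiberT x = fiberT y → x = y := by decide

/-- For ⟨C,C⟩ = 4, ⟨C,K⟩ = −4 and any D: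
6D + 6⟨K+C,D⟩(K+C) + Σ_{E line, ⟨C,E⟩=1} ⟨D,E⟩·E = Σ_{(F,G) fibers, F+G=C} ⟨D,F⟩·G. -/
theorem assoc_identity_genus1 :
    ∀ C : Lam, ip C C = 4 → ip C Kc = -4 →
    {E : Lam | IsLine E ∧ ip C E = 1}.Finite ∧
    {p : Lam × Lam | IsFiber p.1 ∧ IsFiber p.2 ∧ p.1 + p.2 = C}.Finite ∧
    ∀ D : Lam,
      (6 : ℤ) • D + (6 * ip (Kc + C) D) • (Kc + C) +
        ∑ᶠ E ∈ {E : Lam | IsLine E ∧ ip C E = 1}, ip D E • E =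
      ∑ᶠ p ∈ {p : Lam × Lam | IsFiber p.1 ∧ IsFiber p.2 ∧ p.1 + p.2 = C},
        ip D p.1 • p.2 := by
  intro C hCC hCK
  have key2 : ∀ F G : Lam, (IsFiber F ∧ IsFiber G ∧ F + G = C) ↔
      (IsFiber F ∧ ip C F = 2 ∧ G = C - F) := by
    intro F G
    constructor
    · rintro ⟨hF, hG, hFG⟩
      have hGe : G = C - F := by rw [← hFG]; abel
      subst hGe
      refine ⟨hF, ?_, rfl⟩
      obtain ⟨f1, -⟩ := hF
      obtain ⟨g1, -⟩ := hG
      rw [ip_expand] at f1 g1 hCC ⊢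
      simp only [Pi.sub_apply] at g1
      have h2 : 2 * (C 0 * F 0 - (C 1 * F 1 + C 2 * F 2 + C 3 * F 3 + C 4 * F 4 + C 5 * F 5 + C 6 * F 6)) = 4 := by
        linear_combination hCC + f1 - g1
      linarith
    · rintro ⟨hF, hip, hGe⟩
      subst hGe
      refine ⟨hF, ⟨?_, ?_⟩, by abel⟩
      · obtain ⟨f1, -⟩ := hF
        rw [ip_expand] at f1 hCC hip ⊢
        simp only [Pi.sub_apply]
        linear_combination hCC + f1 - 2*hip
      · obtain ⟨-, f2⟩ := hF
        rw [ip_expand] at f2 hCK ⊢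
        simp only [Pi.sub_apply, Kc_0, Kc_1, Kc_2, Kc_3, Kc_4, Kc_5, Kc_6] at f2 hCK ⊢
        linear_combination hCK - f2
  have hset1 : {E : Lam | IsLine E ∧ ip C E = 1} =
      ↑(((Finset.range 27).filter (fun k => ip C (lineT k) = 1)).image lineT) := by
    ext E
    simp only [Set.mem_setOf_eq, Finset.coe_image, Set.mem_image, Finset.mem_coe,
      Finset.mem_filter, Finset.mem_range]
    constructor
    · rintro ⟨hE, hip⟩
      obtain ⟨k, hk, rfl⟩ := (lineChar E).mp hE
      exact ⟨k, ⟨Finset.mem_range.mp hk, hip⟩, rfl⟩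
    · rintro ⟨k, ⟨hk, hip⟩, rfl⟩
      exact ⟨(lineChar _).mpr ⟨k, Finset.mem_range.mpr hk, rfl⟩, hip⟩
  have hset2 : {p : Lam × Lam | IsFiber p.1 ∧ IsFiber p.2 ∧ p.1 + p.2 = C} =
      ↑(((Finset.range 27).filter (fun k => ip C (fiberT k) = 2)).image
        (fun k => (fiberT k, C - fiberT k))) := by
    ext ⟨F, G⟩
    simp only [Set.mem_setOf_eq, Finset.coe_image, Set.mem_image, Finset.mem_coe,
      Finset.mem_filter, Finset.mem_range, Prod.mk.injEq]
    constructor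
    · rintro h
      obtain ⟨hF, hip, hGe⟩ := (key2 F G).mp h
      obtain ⟨k, hk, rfl⟩ := (fiberChar F).mp hF
      exact ⟨k, ⟨Finset.mem_range.mp hk, hip⟩, rfl, hGe.symm⟩
    · rintro ⟨k, ⟨hk, hip⟩, rfl, rfl⟩
      exact (key2 _ _).mpr ⟨(fiberChar _).mpr ⟨k, Finset.mem_range.mpr hk, rfl⟩, hip, rfl⟩
  refine ⟨hset1 ▸ Finset.finite_toSet _, hset2 ▸ Finset.finite_toSet _, ?_⟩
  intro D
  rw [hset1, hset2, finsum_mem_coe_finset, finsum_mem_coe_finset]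
  rw [Finset.sum_image (fun x hx y hy h => hinjL x (Finset.mem_of_mem_filter x hx)
        y (Finset.mem_of_mem_filter y hy) h),
      Finset.sum_image (fun x hx y hy h => hinjF x (Finset.mem_of_mem_filter x hx)
        y (Finset.mem_of_mem_filter y hy) (congrArg Prod.fst h)),
      Finset.sum_filter, Finset.sum_filter]
  obtain ⟨j, hj, hCeq⟩ := (CChar C).mp ⟨hCC, hCK⟩
  rw [Finset.mem_range] at hj
  subst hCeq
  interval_cases j <;>
    (simp (config := { decide := true }) only [Finset.sum_range_succ, Finset.sum_range_zero,
       add_zero, zero_add, ite_true, ite_false]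
     refine vecEq _ _ ?_ ?_ ?_ ?_ ?_ ?_ ?_ <;>
       (simp only [ip_expand, Pi.add_apply, Pi.smul_apply,
          Pi.sub_apply, Pi.mul_apply, smul_eq_mul, lineT_0_0, lineT_0_1, lineT_0_2, lineT_0_3, lineT_0_4, lineT_0_5, lineT_0_6, lineT_1_0, lineT_1_1, lineT_1_2, lineT_1_3, lineT_1_4, lineT_1_5, lineT_1_6, lineT_2_0, lineT_2_1, lineT_2_2, lineT_2_3, lineT_2_4, lineT_2_5, lineT_2_6, lineT_3_0, lineT_3_1, lineT_3_2, lineT_3_3, lineT_3_4, lineT_3_5, lineT_3_6, lineT_4_0, lineT_4_1, lineT_4_2, lineT_4_3, lineT_4_4, lineT_4_5, lineT_4_6, lineT_5_0, lineT_5_1, lineT_5_2, lineT_5_3, lineT_5_4, lineT_5_5, lineT_5_6, lineT_6_0, lineT_6_1, lineT_6_2, lineT_6_3, lineT_6_4, lineT_6_5, lineT_6_6, lineT_7_0, lineT_7_1, lineT_7_2, lineT_7_3, lineT_7_4, lineT_7_5, lineT_7_6, lineT_8_0, lineT_8_1, lineT_8_2, lineT_8_3, lineT_8_4, lineT_8_5,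 lineT_8_6, lineT_9_0, lineT_9_1, lineT_9_2, lineT_9_3, lineT_9_4, lineT_9_5, lineT_9_6, lineT_10_0, lineT_10_1, lineT_10_2, lineT_10_3, lineT_10_4, lineT_10_5, lineT_10_6, lineT_11_0, lineT_11_1, lineT_11_2, lineT_11_3, lineT_11_4, lineT_11_5, lineT_11_6, lineT_12_0, lineT_12_1, lineT_12_2, lineT_12_3, lineT_12_4, lineT_12_5, lineT_12_6, lineT_13_0, lineT_13_1, lineT_13_2, lineT_13_3, lineT_13_4, lineT_13_5, lineT_13_6, lineT_14_0, lineT_14_1, lineT_14_2, lineT_14_3, lineT_14_4, lineT_14_5, lineT_14_6, lineT_15_0, lineT_15_1, lineT_15_2, lineT_15_3, lineT_15_4, lineT_15_5, lineT_15_6, lineT_16_0, lineT_16_1, lineT_16_2, lineT_16_3, lineT_16_4, lineT_16_5, lineT_16_6, lineT_17_0, lineT_17_1, lineT_17_2, lineT_17_3, lineT_17_4, lineT_17_5, lineT_17_6, lineT_18_0, lineT_18_1, lineT_18_2, lineT_18_3, lineT_18_4, lineT_18_5, lineT_18_6, lineT_19_0, lineT_19_1, lineT_19_2, lineT_19_3,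 lineT_19_4, lineT_19_5, lineT_19_6, lineT_20_0, lineT_20_1, lineT_20_2, lineT_20_3, lineT_20_4, lineT_20_5, lineT_20_6, lineT_21_0, lineT_21_1, lineT_21_2, lineT_21_3, lineT_21_4, lineT_21_5, lineT_21_6, lineT_22_0, lineT_22_1, lineT_22_2, lineT_22_3, lineT_22_4, lineT_22_5, lineT_22_6, lineT_23_0, lineT_23_1, lineT_23_2, lineT_23_3, lineT_23_4, lineT_23_5, lineT_23_6, lineT_24_0, lineT_24_1, lineT_24_2, lineT_24_3, lineT_24_4, lineT_24_5, lineT_24_6, lineT_25_0, lineT_25_1, lineT_25_2, lineT_25_3, lineT_25_4, lineT_25_5, lineT_25_6, lineT_26_0, lineT_26_1, lineT_26_2, lineT_26_3, lineT_26_4, lineT_26_5, lineT_26_6, fiberT_0_0, fiberT_0_1, fiberT_0_2, fiberT_0_3, fiberT_0_4, fiberT_0_5, fiberT_0_6, fiberT_1_0, fiberT_1_1, fiberT_1_2, fiberT_1_3, fiberT_1_4, fiberT_1_5, fiberT_1_6, fiberT_2_0, fiberT_2_1, fiberT_2_2, fiberT_2_3, fiberT_2_4, fiberT_2_5, fiberT_2_6,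 fiberT_3_0, fiberT_3_1, fiberT_3_2, fiberT_3_3, fiberT_3_4, fiberT_3_5, fiberT_3_6, fiberT_4_0, fiberT_4_1, fiberT_4_2, fiberT_4_3, fiberT_4_4, fiberT_4_5, fiberT_4_6, fiberT_5_0, fiberT_5_1, fiberT_5_2, fiberT_5_3, fiberT_5_4, fiberT_5_5, fiberT_5_6, fiberT_6_0, fiberT_6_1, fiberT_6_2, fiberT_6_3, fiberT_6_4, fiberT_6_5, fiberT_6_6, fiberT_7_0, fiberT_7_1, fiberT_7_2, fiberT_7_3, fiberT_7_4, fiberT_7_5, fiberT_7_6, fiberT_8_0, fiberT_8_1, fiberT_8_2, fiberT_8_3, fiberT_8_4, fiberT_8_5, fiberT_8_6, fiberT_9_0, fiberT_9_1, fiberT_9_2, fiberT_9_3, fiberT_9_4, fiberT_9_5, fiberT_9_6, fiberT_10_0, fiberT_10_1, fiberT_10_2, fiberT_10_3, fiberT_10_4, fiberT_10_5, fiberT_10_6, fiberT_11_0, fiberT_11_1, fiberT_11_2, fiberT_11_3, fiberT_11_4, fiberT_11_5, fiberT_11_6, fiberT_12_0, fiberT_12_1, fiberT_12_2, fiberT_12_3,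 fiberT_12_4, fiberT_12_5, fiberT_12_6, fiberT_13_0, fiberT_13_1, fiberT_13_2, fiberT_13_3, fiberT_13_4, fiberT_13_5, fiberT_13_6, fiberT_14_0, fiberT_14_1, fiberT_14_2, fiberT_14_3, fiberT_14_4, fiberT_14_5, fiberT_14_6, fiberT_15_0, fiberT_15_1, fiberT_15_2, fiberT_15_3, fiberT_15_4, fiberT_15_5, fiberT_15_6, fiberT_16_0, fiberT_16_1, fiberT_16_2, fiberT_16_3, fiberT_16_4, fiberT_16_5, fiberT_16_6, fiberT_17_0, fiberT_17_1, fiberT_17_2, fiberT_17_3, fiberT_17_4, fiberT_17_5, fiberT_17_6, fiberT_18_0, fiberT_18_1, fiberT_18_2, fiberT_18_3, fiberT_18_4, fiberT_18_5, fiberT_18_6, fiberT_19_0, fiberT_19_1, fiberT_19_2, fiberT_19_3, fiberT_19_4, fiberT_19_5, fiberT_19_6, fiberT_20_0, fiberT_20_1, fiberT_20_2, fiberT_20_3, fiberT_20_4, fiberT_20_5, fiberT_20_6, fiberT_21_0, fiberT_21_1, fiberT_21_2, fiberT_21_3, fiberT_21_4, fiberT_21_5, fiberT_21_6, fiberT_22_0,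 fiberT_22_1, fiberT_22_2, fiberT_22_3, fiberT_22_4, fiberT_22_5, fiberT_22_6, fiberT_23_0, fiberT_23_1, fiberT_23_2, fiberT_23_3, fiberT_23_4, fiberT_23_5, fiberT_23_6, fiberT_24_0, fiberT_24_1, fiberT_24_2, fiberT_24_3, fiberT_24_4, fiberT_24_5, fiberT_24_6, fiberT_25_0, fiberT_25_1, fiberT_25_2, fiberT_25_3, fiberT_25_4, fiberT_25_5, fiberT_25_6, fiberT_26_0, fiberT_26_1, fiberT_26_2, fiberT_26_3, fiberT_26_4, fiberT_26_5, fiberT_26_6, CT_0_0, CT_0_1, CT_0_2, CT_0_3, CT_0_4, CT_0_5, CT_0_6, CT_1_0, CT_1_1, CT_1_2, CT_1_3, CT_1_4, CT_1_5, CT_1_6, CT_2_0, CT_2_1, CT_2_2, CT_2_3, CT_2_4, CT_2_5, CT_2_6, CT_3_0, CT_3_1, CT_3_2, CT_3_3, CT_3_4, CT_3_5, CT_3_6, CT_4_0, CT_4_1, CT_4_2, CT_4_3, CT_4_4, CT_4_5, CT_4_6, CT_5_0, CT_5_1, CT_5_2, CT_5_3, CT_5_4, CT_5_5, CT_5_6,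 CT_6_0, CT_6_1, CT_6_2, CT_6_3, CT_6_4, CT_6_5, CT_6_6, CT_7_0, CT_7_1, CT_7_2, CT_7_3, CT_7_4, CT_7_5, CT_7_6, CT_8_0, CT_8_1, CT_8_2, CT_8_3, CT_8_4, CT_8_5, CT_8_6, CT_9_0, CT_9_1, CT_9_2, CT_9_3, CT_9_4, CT_9_5, CT_9_6, CT_10_0, CT_10_1, CT_10_2, CT_10_3, CT_10_4, CT_10_5, CT_10_6, CT_11_0, CT_11_1, CT_11_2, CT_11_3, CT_11_4, CT_11_5, CT_11_6, CT_12_0, CT_12_1, CT_12_2, CT_12_3, CT_12_4, CT_12_5, CT_12_6, CT_13_0, CT_13_1, CT_13_2, CT_13_3, CT_13_4, CT_13_5, CT_13_6, CT_14_0, CT_14_1, CT_14_2, CT_14_3, CT_14_4, CT_14_5, CT_14_6, CT_15_0, CT_15_1, CT_15_2, CT_15_3, CT_15_4, CT_15_5, CT_15_6, CT_16_0, CT_16_1, CT_16_2, CT_16_3, CT_16_4, CT_16_5, CT_16_6, CT_17_0, CT_17_1, CT_17_2, CT_17_3, CT_17_4, CT_17_5, CT_17_6, CT_18_0, CT_18_1,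 CT_18_2, CT_18_3, CT_18_4, CT_18_5, CT_18_6, CT_19_0, CT_19_1, CT_19_2, CT_19_3, CT_19_4, CT_19_5, CT_19_6, CT_20_0, CT_20_1, CT_20_2, CT_20_3, CT_20_4, CT_20_5, CT_20_6, CT_21_0, CT_21_1, CT_21_2, CT_21_3, CT_21_4, CT_21_5, CT_21_6, CT_22_0, CT_22_1, CT_22_2, CT_22_3, CT_22_4, CT_22_5, CT_22_6, CT_23_0, CT_23_1, CT_23_2, CT_23_3, CT_23_4, CT_23_5, CT_23_6, CT_24_0, CT_24_1, CT_24_2, CT_24_3, CT_24_4, CT_24_5, CT_24_6, CT_25_0, CT_25_1, CT_25_2, CT_25_3, CT_25_4, CT_25_5, CT_25_6, CT_26_0, CT_26_1, CT_26_2, CT_26_3, CT_26_4, CT_26_5, CT_26_6, Kc_0, Kc_1, Kc_2, Kc_3, Kc_4, Kc_5, Kc_6]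
        ring))
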